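/- arXiv:1606.08143 — 11 statements merged into one kernel-verified Lean document; each statement's English description precedes it below -/
import Mathlib

section
/- If G is a finite bipartite graph, then the total domination number of the prism of G equals twice the domination number of G; that is, γ_t(G □ K₂) = 2·γ(G). -/
open SimpleGraph

/-- The complete graph on two vertices. -/
abbrev K2 : SimpleGraph (Fin 2) := ⊤

/-- `S` is a dominating set of `G`: every vertex not in `S` is adjacent to a vertex of `S`. -/
def IsDominatingSet {V : Type*} (G : SimpleGraph V) (S : Finset V) : Prop :=
  ∀ v : V, v ∉ S → ∃ u ∈ S, G.Adj v u

/-- `S` is a total dominating set of `G`: every vertex is adjacent to a vertex of `S`. -/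
def IsTotalDominatingSet {V : Type*} (G : SimpleGraph V) (S : Finset V) : Prop :=
  ∀ v : V, ∃ u ∈ S, G.Adj v u

/-- The domination number of `G`. -/
noncomputable def dominationNumber {V : Type*} (G : SimpleGraph V) : ℕ :=
  sInf {n : ℕ | ∃ S : Finset V, IsDominatingSet G S ∧ S.card = n}

/-- The total domination number of `G`. -/
noncomputable def totalDominationNumber {V : Type*} (G : SimpleGraph V) : ℕ :=
  sInf {n : ℕ | ∃ S : Finset V, IsTotalDominatingSet G S ∧ S.card = n}

lemma fin2_ne_eq_add_one {a b : Fin 2} (h : a ≠ b) : b = a + 1 := by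
  revert h; revert a b; decide

lemma fin2_ne_add_one (a : Fin 2) : a ≠ a + 1 := by revert a; decide

lemma fin2_add_one_add_one (a : Fin 2) : a + 1 + 1 = a := by revert a; decide

/-- If `G` is a finite bipartite graph, then the total domination number of the prism
`G □ K₂` equals twice the domination number of `G`. -/
theorem total_domination_of_bipartite_prism {V : Type*} [Fintype V]
    (G : SimpleGraph V) (hbip : G.Colorable 2) :
    totalDominationNumber (G □ K2) = 2 * dominationNumber G := by
  classical
  obtain ⟨c⟩ := hbip
  have hdomNE : {n : ℕ | ∃ S : Finset V, IsDominatingSet G S ∧ S.card = n}.Nonempty :=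
    ⟨(Finset.univ : Finset V).card, Finset.univ,
      fun v hv => absurd (Finset.mem_univ v) hv, rfl⟩
  have htotNE : {n : ℕ | ∃ S : Finset (V × Fin 2),
      IsTotalDominatingSet (G □ K2) S ∧ S.card = n}.Nonempty := by
    refine ⟨(Finset.univ : Finset (V × Fin 2)).card, Finset.univ, ?_, rfl⟩
    intro p
    refine ⟨(p.1, p.2 + 1), Finset.mem_univ _, Or.inr ⟨?_, rfl⟩⟩
    exact fin2_ne_add_one p.2
  apply le_antisymm
  · -- upper bound
    obtain ⟨S, hS, hScard⟩ := Nat.sInf_mem hdomNE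
    have hT : IsTotalDominatingSet (G □ K2) (S ×ˢ (Finset.univ : Finset (Fin 2))) := by
      rintro ⟨v, i⟩
      by_cases hv : v ∈ S
      · exact ⟨(v, i + 1), Finset.mem_product.2 ⟨hv, Finset.mem_univ _⟩,
          Or.inr ⟨fin2_ne_add_one i, rfl⟩⟩
      · obtain ⟨u, hu, hadj⟩ := hS v hv
        exact ⟨(u, i), Finset.mem_product.2 ⟨hu, Finset.mem_univ _⟩,
          Or.inl ⟨hadj, rfl⟩⟩
    have hle : totalDominationNumber (G □ K2) ≤ (S ×ˢ (Finset.univ : Finset (Fin 2))).card :=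
      Nat.sInf_le ⟨_, hT, rfl⟩
    calc totalDominationNumber (G □ K2) ≤ (S ×ˢ (Finset.univ : Finset (Fin 2))).card := hle
      _ = S.card * 2 := by simp [Finset.card_product]
      _ = 2 * dominationNumber G := by rw [hScard]; unfold dominationNumber; ring
  · -- lower bound
    obtain ⟨D, hD, hDcard⟩ := Nat.sInf_mem htotNE
    set T₀ := D.filter (fun p => p.2 = c p.1) with hT₀
    set T₁ := D.filter (fun p => p.2 ≠ c p.1) with hT₁
    set S₀ := T₀.image Prod.fst with hS₀
    set S₁ := T₁.image Prod.fst with hS₁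
    have memS₀ : ∀ v : V, v ∈ S₀ ↔ (v, c v) ∈ D := by
      intro v
      constructor
      · intro hv
        obtain ⟨p, hp, hpv⟩ := Finset.mem_image.1 hv
        obtain ⟨hpD, hpc⟩ := Finset.mem_filter.1 hp
        have : p = (v, c v) := by
          cases p with
          | mk a b => simp_all
        rwa [this] at hpD
      · intro hv
        exact Finset.mem_image.2 ⟨(v, c v), Finset.mem_filter.2 ⟨hv, rfl⟩, rfl⟩
    have memS₁ : ∀ v : V, v ∈ S₁ ↔ (v, c v + 1) ∈ D := by
      intro v
      constructor
      · intro hv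
        obtain ⟨p, hp, hpv⟩ := Finset.mem_image.1 hv
        obtain ⟨hpD, hpc⟩ := Finset.mem_filter.1 hp
        have hb : p.2 = c p.1 + 1 := fin2_ne_eq_add_one (Ne.symm hpc)
        have : p = (v, c v + 1) := by
          cases p with
          | mk a b =>
            simp only at hpv hb
            subst hpv
            simp [hb]
        rwa [this] at hpD
      · intro hv
        refine Finset.mem_image.2 ⟨(v, c v + 1), Finset.mem_filter.2 ⟨hv, ?_⟩, rfl⟩
        exact Ne.symm (fin2_ne_add_one (c v))
    -- S₀ dominates
    have hdom₀ : IsDominatingSet G S₀ := by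
      intro v hv
      have hvD : (v, c v) ∉ D := fun h => hv ((memS₀ v).2 h)
      obtain ⟨⟨u, j⟩, huD, hadj⟩ := hD (v, c v + 1)
      rcases hadj with ⟨hGuj, hj⟩ | ⟨hK, hu⟩
      · -- G.Adj v u, j = c v + 1
        refine ⟨u, (memS₀ u).2 ?_, hGuj⟩
        have hcu : c u = c v + 1 := fin2_ne_eq_add_one (c.valid hGuj)
        simp only at hj
        rw [hcu, hj]
        exact huD
      · -- u = v, j ≠ c v + 1 hence j = c v
        exfalso
        simp only at hK hu
        have hj : j = c v := by
          have := fin2_ne_eq_add_one hK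
          rw [fin2_add_one_add_one] at this
          exact this
        rw [← hu, hj] at huD
        exact hvD huD
    -- S₁ dominates
    have hdom₁ : IsDominatingSet G S₁ := by
      intro v hv
      have hvD : (v, c v + 1) ∉ D := fun h => hv ((memS₁ v).2 h)
      obtain ⟨⟨u, j⟩, huD, hadj⟩ := hD (v, c v)
      rcases hadj with ⟨hGuj, hj⟩ | ⟨hK, hu⟩
      · refine ⟨u, (memS₁ u).2 ?_, hGuj⟩
        have hcu : c u = c v + 1 := fin2_ne_eq_add_one (c.valid hGuj)
        simp only at hj
        rw [hcu, fin2_add_one_add_one, hj]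
        exact huD
      · exfalso
        simp only at hK hu
        have hj : j = c v + 1 := fin2_ne_eq_add_one hK
        rw [← hu, hj] at huD
        exact hvD huD
    have hle₀ : dominationNumber G ≤ S₀.card := Nat.sInf_le ⟨S₀, hdom₀, rfl⟩
    have hle₁ : dominationNumber G ≤ S₁.card := Nat.sInf_le ⟨S₁, hdom₁, rfl⟩
    have hcard₀ : S₀.card ≤ T₀.card := Finset.card_image_le
    have hcard₁ : S₁.card ≤ T₁.card := Finset.card_image_le
    have hsplit : T₀.card + T₁.card = D.card :=
      Finset.card_filter_add_card_filter_not (fun p : V × Fin 2 => p.2 = c p.1)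
    calc 2 * dominationNumber G = dominationNumber G + dominationNumber G := by ring
      _ ≤ S₀.card + S₁.card := Nat.add_le_add hle₀ hle₁
      _ ≤ T₀.card + T₁.card := Nat.add_le_add hcard₀ hcard₁
      _ = D.card := hsplit
      _ = totalDominationNumber (G □ K2) := hDcard
end

section
/- For every integer n ≥ 1, the total domination number of the (n+1)-dimensional hypercube equals twice the domination number of the n-dimensional hypercube: γ_t(Q_{n+1}) = 2·γ(Q_n). -/
open SimpleGraph

/-- The `n`-dimensional hypercube: vertices are binary strings of length `n`,
two vertices are adjacent iff they differ in exactly one coordinate. -/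
def hypercube (n : ℕ) : SimpleGraph (Fin n → Bool) where
  Adj x y := hammingDist x y = 1
  symm := ⟨fun x y h => by simpa [hammingDist_comm] using h⟩
  loopless := ⟨fun x h => by simp [hammingDist_self] at h⟩


/-!
Write `Q_{n+1} ≅ Q_n □ K₂`. If `S` dominates `Q_n`, then `S × K₂` totally dominates `Q_n □ K₂`,
since a vertex `(v, i)` with `v ∈ S` sees `(v, 1 - i)`. Conversely, let `χ` be a proper
2-colouring of `Q_n`, so that `(v, i) ↦ χ v + i` properly colours `Q_n □ K₂`, and let `T` totally
dominate `Q_n □ K₂`. For each colour `c`, the vertices of `T` not coloured `c` project onto a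
dominating set of `Q_n`: the `T`-neighbour of the vertex `(v, i)` of colour `c` lies over `v` or
over a neighbour of `v`. Both colour classes of `T` thus have at least `γ(Q_n)` elements.
-/

open Finset

variable {V W : Type*} {G : SimpleGraph V} {H : SimpleGraph W}

lemma isDominatingSet_univ [Fintype V] (G : SimpleGraph V) : IsDominatingSet G univ :=
  fun v hv => absurd (mem_univ v) hv

lemma dominationNumber_le {S : Finset V} (hS : IsDominatingSet G S) :
    dominationNumber G ≤ #S :=
  Nat.sInf_le ⟨S, hS, rfl⟩

lemma exists_isDominatingSet_card_eq_dominationNumber [Fintype V] (G : SimpleGraph V) :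
    ∃ S, IsDominatingSet G S ∧ #S = dominationNumber G :=
  Nat.sInf_mem (s := {n | ∃ S, IsDominatingSet G S ∧ #S = n})
    ⟨_, univ, isDominatingSet_univ G, rfl⟩

lemma totalDominationNumber_le {S : Finset V} (hS : IsTotalDominatingSet G S) :
    totalDominationNumber G ≤ #S :=
  Nat.sInf_le ⟨S, hS, rfl⟩

lemma le_totalDominationNumber {m : ℕ} {S : Finset V} (hS : IsTotalDominatingSet G S)
    (h : ∀ T, IsTotalDominatingSet G T → m ≤ #T) : m ≤ totalDominationNumber G := by
  unfold totalDominationNumber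
  exact le_csInf ⟨_, S, hS, rfl⟩ (by rintro _ ⟨T, hT, rfl⟩; exact h T hT)

lemma IsTotalDominatingSet.map (e : G ≃g H) {S : Finset V} (hS : IsTotalDominatingSet G S) :
    IsTotalDominatingSet H (S.map e.toEquiv.toEmbedding) := by
  intro w
  obtain ⟨u, hu, hadj⟩ := hS (e.symm w)
  exact ⟨e u, mem_map_of_mem _ hu, by simpa using e.map_adj_iff.mpr hadj⟩

theorem SimpleGraph.Iso.totalDominationNumber_eq (e : G ≃g H) :
    totalDominationNumber G = totalDominationNumber H := by
  unfold totalDominationNumber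
  congr 1
  ext m
  constructor
  · rintro ⟨S, hS, rfl⟩
    exact ⟨_, hS.map e, card_map _⟩
  · rintro ⟨S, hS, rfl⟩
    exact ⟨_, hS.map e.symm, card_map _⟩

lemma IsDominatingSet.isTotalDominatingSet_boxProd [Fintype W] {S : Finset V}
    (hS : IsDominatingSet G S) (hH : ∀ w, ∃ w', H.Adj w w') :
    IsTotalDominatingSet (G □ H) (S ×ˢ univ) := by
  rintro ⟨v, w⟩
  by_cases hv : v ∈ S
  · obtain ⟨w', hw'⟩ := hH w
    exact ⟨(v, w'), mem_product.2 ⟨hv, mem_univ _⟩, Or.inr ⟨hw', rfl⟩⟩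
  · obtain ⟨u, hu, hvu⟩ := hS v hv
    exact ⟨(u, w), mem_product.2 ⟨hu, mem_univ _⟩, Or.inl ⟨hvu, rfl⟩⟩

lemma totalDominationNumber_boxProd_le [Fintype V] [Fintype W] (hH : ∀ w, ∃ w', H.Adj w w') :
    totalDominationNumber (G □ H) ≤ dominationNumber G * Fintype.card W := by
  obtain ⟨S, hS, hcard⟩ := exists_isDominatingSet_card_eq_dominationNumber G
  calc totalDominationNumber (G □ H) ≤ #(S ×ˢ univ) :=
        totalDominationNumber_le (hS.isTotalDominatingSet_boxProd hH)
    _ = dominationNumber G * Fintype.card W := by rw [card_product, card_univ, hcard]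

lemma exists_K2_adj (i : Fin 2) : ∃ j, K2.Adj i j :=
  ⟨i + 1, by revert i; decide⟩

def SimpleGraph.Coloring.boxProdK2 (C : G.Coloring (Fin 2)) : (G □ K2).Coloring (Fin 2) :=
  Coloring.mk (fun p => C p.1 + p.2) fun {p q} h => by
    rcases h with ⟨h, he⟩ | ⟨h, he⟩
    · rw [he]
      exact fun e => C.valid h (add_right_cancel e)
    · rw [he]
      exact fun e => h (add_left_cancel e)

lemma isDominatingSet_image_fst_filter_ne [DecidableEq V] (C : G.Coloring (Fin 2))
    {T : Finset (V × Fin 2)} (hT : IsTotalDominatingSet (G □ K2) T) (c : Fin 2) :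
    IsDominatingSet G ((T.filter fun p => C.boxProdK2 p ≠ c).image Prod.fst) := by
  intro v hv
  obtain ⟨⟨u, j⟩, hu, hadj⟩ := hT (v, c - C v)
  have hcol : C.boxProdK2 (u, j) ≠ c := by
    have hvc : C.boxProdK2 (v, c - C v) = c := add_sub_cancel (C v) c
    exact hvc ▸ (C.boxProdK2.valid hadj).symm
  have hmem : u ∈ (T.filter fun p => C.boxProdK2 p ≠ c).image Prod.fst :=
    mem_image_of_mem _ (mem_filter.2 ⟨hu, hcol⟩)
  rcases hadj with ⟨hvu, -⟩ | ⟨-, rfl⟩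
  · exact ⟨u, hmem, hvu⟩
  · exact absurd hmem hv

lemma two_mul_dominationNumber_le_card [DecidableEq V] (C : G.Coloring (Fin 2))
    {T : Finset (V × Fin 2)} (hT : IsTotalDominatingSet (G □ K2) T) :
    2 * dominationNumber G ≤ #T := by
  have hlayer (c : Fin 2) : dominationNumber G ≤ #(T.filter fun p => C.boxProdK2 p ≠ c) :=
    (dominationNumber_le (isDominatingSet_image_fst_filter_ne C hT c)).trans card_image_le
  have hsplit : #(T.filter fun p => C.boxProdK2 p ≠ 0) +
      #(T.filter fun p => C.boxProdK2 p ≠ 1) = #T := by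
    rw [← card_filter_add_card_filter_not (s := T) (fun p => C.boxProdK2 p ≠ 0)]
    congr 2
    exact filter_congr fun p _ => by generalize C.boxProdK2 p = x; revert x; decide
  have := hlayer 0
  have := hlayer 1
  omega

theorem totalDominationNumber_boxProd_K2 [Fintype V] [DecidableEq V] (hG : G.IsBipartite) :
    totalDominationNumber (G □ K2) = 2 * dominationNumber G := by
  obtain ⟨C⟩ := hG
  refine le_antisymm ?_ <| le_totalDominationNumber
    ((isDominatingSet_univ G).isTotalDominatingSet_boxProd exists_K2_adj)
    fun T hT => two_mul_dominationNumber_le_card C hT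
  calc totalDominationNumber (G □ K2) ≤ dominationNumber G * Fintype.card (Fin 2) :=
        totalDominationNumber_boxProd_le exists_K2_adj
    _ = 2 * dominationNumber G := by rw [Fintype.card_fin, mul_comm]

lemma hammingDist_eq_ite_add_hammingDist_tail {n : ℕ} (x y : Fin (n + 1) → Bool) :
    hammingDist x y = (if x 0 = y 0 then 0 else 1) + hammingDist (Fin.tail x) (Fin.tail y) := by
  rw [hammingDist, Fin.card_filter_univ_succ']
  simp only [ite_not]
  rfl

def hypercubeSuccIso (n : ℕ) : hypercube (n + 1) ≃g hypercube n □ K2 where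
  toEquiv := (Fin.consEquiv fun _ => Bool).symm.trans <|
    (Equiv.prodComm _ _).trans (Equiv.prodCongr (Equiv.refl _) finTwoEquiv.symm)
  map_rel_iff' {x y} := by
    change (hammingDist (Fin.tail x) (Fin.tail y) = 1 ∧
        finTwoEquiv.symm (x 0) = finTwoEquiv.symm (y 0) ∨
      finTwoEquiv.symm (x 0) ≠ finTwoEquiv.symm (y 0) ∧ Fin.tail x = Fin.tail y) ↔
        hammingDist x y = 1
    rw [Equiv.apply_eq_iff_eq, ne_eq, Equiv.apply_eq_iff_eq, ← hammingDist_eq_zero,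
      hammingDist_eq_ite_add_hammingDist_tail]
    split_ifs with h <;> simp [h]

lemma isBipartite_hypercube : ∀ n, (hypercube n).IsBipartite
  | 0 => ⟨Coloring.mk (fun _ => 0) fun {x y} h =>
      absurd h (by simp [hypercube, Subsingleton.elim x y])⟩
  | n + 1 =>
      Colorable.of_hom (hypercubeSuccIso n).toHom ⟨(isBipartite_hypercube n).some.boxProdK2⟩

theorem totalDomination_hypercube_succ_general (n : ℕ) :
    totalDominationNumber (hypercube (n + 1)) = 2 * dominationNumber (hypercube n) := by
  rw [(hypercubeSuccIso n).totalDominationNumber_eq,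
    totalDominationNumber_boxProd_K2 (isBipartite_hypercube n)]

/-- For every `n ≥ 1`, `γ_t(Q_{n+1}) = 2 γ(Q_n)`. -/
theorem totalDomination_hypercube_succ (n : ℕ) (hn : 1 ≤ n) :
    totalDominationNumber (hypercube (n + 1)) = 2 * dominationNumber (hypercube n) :=
  totalDomination_hypercube_succ_general n
end

section
/- For every integer k ≥ 1, the total domination number of the hypercube of dimension 2^k satisfies γ_t(Q_{2^k}) = 2^{2^k − k}. -/
open SimpleGraph

/-!
Each vertex of a graph of maximum degree `d` is adjacent to at most `d` vertices, so a total
dominating set has at least `|V| / d` elements, with equality exactly when the neighbourhoods of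
its vertices partition `V`. For `n = 2 ^ k` such a perfect set exists in `Q_n`: label the
coordinates bijectively by the group `(ZMod 2)^k` and take the code of all `x` whose syndrome
`∑_{x i = true} i` vanishes. Flipping coordinate `i` adds `i` to the syndrome, so each vertex `x`
has exactly one neighbour in the code, obtained by flipping the coordinate labelled by the
syndrome of `x`; for a codeword `x` this is the coordinate labelled `0`, which contributes nothing
to any syndrome. (The code is the Hamming code of length `n - 1` with that free coordinate added.)
-/

open Finset

section TotalDomination

variable {V : Type*} {G : SimpleGraph V}

theorem totalDominationNumber_eq_card {S : Finset V} (hS : IsTotalDominatingSet G S)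
    (hmin : ∀ T, IsTotalDominatingSet G T → S.card ≤ T.card) :
    totalDominationNumber G = S.card :=
  le_antisymm (Nat.sInf_le ⟨S, hS, rfl⟩) <|
    le_csInf ⟨S.card, S, hS, rfl⟩ fun _ ⟨T, hT, hcard⟩ => hcard ▸ hmin T hT

theorem IsTotalDominatingSet.card_le_mul_card [Fintype V] [DecidableRel G.Adj] {d : ℕ}
    (hdeg : ∀ v, G.degree v ≤ d) {S : Finset V} (hS : IsTotalDominatingSet G S) :
    Fintype.card V ≤ S.card * d := by
  classical
  have hcover : univ ⊆ S.biUnion fun u => G.neighborFinset u := fun v _ => by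
    obtain ⟨u, hu, hvu⟩ := hS v
    exact mem_biUnion.2 ⟨u, hu, (G.mem_neighborFinset u v).2 hvu.symm⟩
  exact (card_le_card hcover).trans (card_biUnion_le_card_mul _ _ _ fun u _ => hdeg u)

theorem totalDominationNumber_eq_of_card_eq_mul [Fintype V] [DecidableRel G.Adj] {d : ℕ}
    (hdeg : ∀ v, G.degree v ≤ d) {S : Finset V} (hS : IsTotalDominatingSet G S)
    (hcard : Fintype.card V = S.card * d) : totalDominationNumber G = S.card := by
  refine totalDominationNumber_eq_card hS fun T hT => ?_
  rcases d.eq_zero_or_pos with rfl | hd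
  · have := S.card_le_univ
    rw [hcard, mul_zero] at this
    omega
  · exact Nat.le_of_mul_le_mul_right (hcard ▸ hT.card_le_mul_card hdeg) hd

end TotalDomination

namespace Hypercube

variable {n : ℕ}

instance : DecidableRel (hypercube n).Adj := fun x y =>
  inferInstanceAs (Decidable (hammingDist x y = 1))

def flipAt (x : Fin n → Bool) (i : Fin n) : Fin n → Bool := Function.update x i (!x i)

@[simp] theorem flipAt_flipAt (x : Fin n → Bool) (i : Fin n) : flipAt (flipAt x i) i = x := by
  simp [flipAt]

theorem adj_iff {x y : Fin n → Bool} : (hypercube n).Adj x y ↔ ∃ i, y = flipAt x i := by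
  change hammingDist x y = 1 ↔ _
  rw [hammingDist, card_eq_one]
  refine exists_congr fun i => ⟨fun h => ?_, fun h => ?_⟩
  · funext j
    have hj : x j ≠ y j ↔ j = i := by simpa using Finset.ext_iff.1 h j
    by_cases hji : j = i
    · subst hji
      cases hx : x j <;> cases hy : y j <;> simp_all [flipAt]
    · simp_all [flipAt]
  · ext j
    by_cases hji : j = i <;> simp_all [flipAt, Function.update_apply]

theorem adj_flipAt (x : Fin n → Bool) (i : Fin n) : (hypercube n).Adj x (flipAt x i) :=
  adj_iff.2 ⟨i, rfl⟩

theorem degree_le (x : Fin n → Bool) : (hypercube n).degree x ≤ n := by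
  calc (hypercube n).degree x ≤ (univ.image (flipAt x)).card := by
        refine card_le_card fun y hy => ?_
        obtain ⟨i, rfl⟩ := adj_iff.1 ((mem_neighborFinset _ _ _).1 hy)
        exact mem_image_of_mem _ (mem_univ i)
    _ ≤ n := card_image_le.trans (card_fin n).le

end Hypercube

section HammingCode

open Hypercube

variable {n : ℕ} {A : Type*} [AddCommGroup A] (e : Fin n ≃ A)

def syndrome (x : Fin n → Bool) : A := ∑ i, if x i then e i else 0

theorem syndrome_flipAt (h2 : ∀ a : A, a + a = 0) (x : Fin n → Bool) (i : Fin n) :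
    syndrome e (flipAt x i) = syndrome e x + e i := by
  have hrest : ∑ j ∈ {i}ᶜ, (if flipAt x i j then e j else 0) =
      ∑ j ∈ {i}ᶜ, if x j then e j else 0 :=
    sum_congr rfl fun j hj => by rw [flipAt, Function.update_of_ne (by simpa using hj)]
  rw [syndrome, syndrome, Fintype.sum_eq_add_sum_compl i, Fintype.sum_eq_add_sum_compl i, hrest]
  cases hx : x i
  · simp [flipAt, hx, add_comm]
  · simp [flipAt, hx, add_right_comm _ _ (e i), h2]

variable [DecidableEq A]

def hammingCode : Finset (Fin n → Bool) := univ.filter fun x => syndrome e x = 0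

variable {e}

theorem mem_hammingCode {x : Fin n → Bool} : x ∈ hammingCode e ↔ syndrome e x = 0 := by
  simp [hammingCode]

theorem flipAt_syndrome_mem_hammingCode (h2 : ∀ a : A, a + a = 0) (x : Fin n → Bool) :
    flipAt x (e.symm (syndrome e x)) ∈ hammingCode e := by
  rw [mem_hammingCode, syndrome_flipAt e h2, e.apply_symm_apply, h2]

theorem isTotalDominatingSet_hammingCode (h2 : ∀ a : A, a + a = 0) :
    IsTotalDominatingSet (hypercube n) (hammingCode e) :=
  fun x => ⟨_, flipAt_syndrome_mem_hammingCode h2 x, adj_flipAt x _⟩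

def equivHammingCodeProd (h2 : ∀ a : A, a + a = 0) :
    (Fin n → Bool) ≃ hammingCode e × Fin n where
  toFun x := (⟨_, flipAt_syndrome_mem_hammingCode h2 x⟩, e.symm (syndrome e x))
  invFun c := flipAt c.1 c.2
  left_inv x := flipAt_flipAt x _
  right_inv := by
    rintro ⟨⟨c, hc⟩, i⟩
    have hsyn : syndrome e (flipAt c i) = e i := by
      rw [syndrome_flipAt e h2, mem_hammingCode.1 hc, zero_add]
    simp [hsyn]

theorem card_hammingCode_mul (h2 : ∀ a : A, a + a = 0) : (hammingCode e).card * n = 2 ^ n := by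
  simpa using (Fintype.card_congr (equivHammingCodeProd h2)).symm

end HammingCode

theorem totalDomination_hypercube_pow_general (k : ℕ) :
    totalDominationNumber (hypercube (2 ^ k)) = 2 ^ (2 ^ k - k) := by
  let e : Fin (2 ^ k) ≃ (Fin k → ZMod 2) := Fintype.equivOfCardEq (by simp)
  have h2 : ∀ a : Fin k → ZMod 2, a + a = 0 := fun a =>
    funext fun i => CharTwo.add_self_eq_zero (a i)
  have hcard := card_hammingCode_mul (e := e) h2
  rw [totalDominationNumber_eq_of_card_eq_mul Hypercube.degree_le
    (isTotalDominatingSet_hammingCode h2) (by simpa using hcard.symm)]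
  refine Nat.eq_of_mul_eq_mul_right (pow_pos two_pos k) ?_
  rw [hcard, ← pow_add, Nat.sub_add_cancel Nat.lt_two_pow_self.le]

/-- For every `k ≥ 1`, `γ_t(Q_{2^k}) = 2^(2^k - k)`. -/
theorem totalDomination_hypercube_pow (k : ℕ) (hk : 1 ≤ k) :
    totalDominationNumber (hypercube (2 ^ k)) = 2 ^ (2 ^ k - k) :=
  totalDomination_hypercube_pow_general k
end

section
/- For every integer k ≥ 1, the domination number of the hypercube of dimension 2^k satisfies γ(Q_{2^k}) = 2^{2^k − k}. -/
open SimpleGraph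

/-!
Upper bound: label the `2 ^ k` coordinates bijectively by the vectors of `𝔽₂ᵏ` and take the
kernel of the syndrome map `x ↦ ∑ xᵢ vᵢ`. A vertex with nonzero syndrome `s` is adjacent to the
kernel (flip the coordinate labelled `s`), and the kernel has `2 ^ (2 ^ k) / 2 ^ k` elements.

Lower bound (van Wee), for `n` even and `S` dominating: let `e y = |S ∩ B(y)| - 1 ≥ 0` be the
excess at `y`, `B` denoting closed balls. For `x ∉ S` the sum `∑_{y ∈ B(x)} |S ∩ B(y)|` counts
`∑_{c ∈ S} |B(x) ∩ B(c)|`, which is even because `y ↦ x + c + y` pairs up `B(x) ∩ B(c)`; as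
`|B(x)| = n + 1` is odd, `B(x)` carries positive excess. Counting the pairs `x ∉ S`, `y ∈ B(x)`
with weight `e y`, and using that a vertex with positive excess lies in at most `n - 1` balls
around vertices outside `S`, gives `∑ e ≥ |S|`, i.e. `n |S| ≥ 2 ^ n`.
-/

open Finset

theorem even_card_of_involution {α : Type*} {s : Finset α} (g : α → α)
    (hg : ∀ a ∈ s, g a ∈ s) (hg_ne : ∀ a ∈ s, g a ≠ a) (hgg : ∀ a ∈ s, g (g a) = a) :
    Even #s := by
  have h : ∑ _a ∈ s, (1 : ZMod 2) = 0 :=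
    sum_involution (fun a _ => g a) (fun _ _ => by decide) (fun a ha _ => hg_ne a ha) hg hgg
  simpa [ZMod.natCast_eq_zero_iff_even] using h

theorem card_filter_eq_zero_mul_card_of_surjective {G H F : Type*} [AddGroup G] [AddGroup H]
    [Fintype G] [Fintype H] [DecidableEq H] [FunLike F G H] [AddMonoidHomClass F G H] (f : F)
    (hf : Function.Surjective f) :
    #{x | f x = 0} * Fintype.card H = Fintype.card G := by
  have h := (f : G →+ H).ker.card_mul_index
  rw [AddSubgroup.index_ker, AddMonoidHom.range_eq_top.mpr hf, AddSubgroup.card_top] at h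
  simpa [Nat.card_eq_fintype_card, Fintype.card_subtype] using h

theorem add_self_eq_zero_of_module_bool {W : Type*} [AddCommGroup W] [Module Bool W] (w : W) :
    w + w = 0 := by
  rw [← one_smul Bool w, ← add_smul]
  exact zero_smul Bool w

section HammingBall

variable {ι : Type*} [Fintype ι]

theorem hammingDist_self_add_add (x c y : ι → Bool) :
    hammingDist x (x + c + y) = hammingDist c y := by
  simp only [hammingDist_eq_hammingNorm, add_assoc, neg_add_cancel_left]
  rfl

variable [DecidableEq ι]

theorem hammingNorm_single_one (i : ι) : hammingNorm (Pi.single i 1 : ι → Bool) = 1 := by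
  rw [hammingNorm, card_eq_one]
  exact ⟨i, by ext j; by_cases h : j = i <;> simp [h]⟩

theorem hammingNorm_le_one_iff {z : ι → Bool} :
    hammingNorm z ≤ 1 ↔ z = 0 ∨ ∃ i, Pi.single i 1 = z := by
  constructor
  · intro h
    rcases Nat.le_one_iff_eq_zero_or_eq_one.mp h with h0 | h1
    · exact .inl (hammingNorm_eq_zero.mp h0)
    · obtain ⟨i, hi⟩ := card_eq_one.mp h1
      refine .inr ⟨i, funext fun j => ?_⟩
      have hj : ¬z j = 0 ↔ j = i := by simpa using Finset.ext_iff.mp hi j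
      by_cases h : j = i
      · rw [Pi.single_apply, if_pos h]
        have hzj := hj.mpr h
        revert hzj; cases z j <;> decide
      · rw [Pi.single_apply, if_neg h]
        exact (not_not.mp (hj.not.mpr h)).symm
  · rintro (rfl | ⟨i, rfl⟩)
    · simp
    · rw [hammingNorm_single_one]

def hammingBall (x : ι → Bool) : Finset (ι → Bool) := {y | hammingDist x y ≤ 1}

variable {x y : ι → Bool}

theorem mem_hammingBall : y ∈ hammingBall x ↔ hammingDist x y ≤ 1 := by
  simp [hammingBall]

theorem mem_hammingBall_comm : y ∈ hammingBall x ↔ x ∈ hammingBall y := by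
  rw [mem_hammingBall, mem_hammingBall, hammingDist_comm]

theorem hammingBall_eq_insert_image (x : ι → Bool) :
    hammingBall x = insert x (univ.image fun i => x + Pi.single i 1) := by
  ext y
  rw [mem_hammingBall, hammingDist_eq_hammingNorm, hammingNorm_le_one_iff]
  simp [neg_add_eq_zero, eq_neg_add_iff_add_eq, eq_comm (a := y)]

theorem card_hammingBall (x : ι → Bool) : #(hammingBall x) = Fintype.card ι + 1 := by
  rw [hammingBall_eq_insert_image, card_insert_of_notMem, card_image_of_injective, card_univ]
  · intro i j h
    simpa [Pi.single_apply] using congrFun (add_left_cancel h) i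
  · simp

theorem even_card_hammingBall_inter {x c : ι → Bool} (h : x ≠ c) :
    Even #(hammingBall x ∩ hammingBall c) := by
  refine even_card_of_involution (fun y => x + c + y) (fun y hy => ?_) (fun y _ => ?_)
    (fun y _ => ?_)
  · simp only [mem_inter, mem_hammingBall] at hy ⊢
    rw [hammingDist_self_add_add, add_comm x c, hammingDist_self_add_add]
    exact hy.symm
  · intro hy
    exact h (add_eq_zero_iff_eq_neg.mp (add_eq_right.mp hy))
  · rw [← add_assoc, add_self_eq_zero_of_module_bool, zero_add]

theorem sum_sum_hammingBall {M : Type*} [AddCommMonoid M] (T : Finset (ι → Bool))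
    (f : (ι → Bool) → M) :
    ∑ x ∈ T, ∑ y ∈ hammingBall x, f y = ∑ y, #(T ∩ hammingBall y) • f y := by
  rw [sum_comm' (t' := univ) (s' := fun y => T ∩ hammingBall y)]
  · simp
  · intro x y
    simp [mem_hammingBall_comm (x := x)]

theorem sum_card_inter_hammingBall (T : Finset (ι → Bool)) :
    ∑ y, #(T ∩ hammingBall y) = #T * (Fintype.card ι + 1) := by
  have h := sum_sum_hammingBall T fun _ => 1
  simp only [sum_const, card_hammingBall, smul_eq_mul, mul_one] at h
  exact h.symm

theorem even_sum_card_inter_hammingBall {S : Finset (ι → Bool)} (hx : x ∉ S) :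
    Even (∑ y ∈ hammingBall x, #(S ∩ hammingBall y)) := by
  have h := sum_card_bipartiteAbove_eq_sum_card_bipartiteBelow (fun c y => c ∈ hammingBall y)
    (s := S) (t := hammingBall x)
  simp only [bipartiteAbove, bipartiteBelow, filter_mem_eq_inter] at h
  rw [← h]
  refine even_sum _ fun c hc => ?_
  rw [filter_congr fun y _ => mem_hammingBall_comm, filter_mem_eq_inter]
  exact even_card_hammingBall_inter (ne_of_mem_of_not_mem hc hx).symm

end HammingBall

section LowerBound

variable {n : ℕ} {S : Finset (Fin n → Bool)}

theorem IsDominatingSet.inter_hammingBall_nonempty (hS : IsDominatingSet (hypercube n) S)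
    (y : Fin n → Bool) : (S ∩ hammingBall y).Nonempty := by
  by_cases hy : y ∈ S
  · exact ⟨y, mem_inter.mpr ⟨hy, by simp [mem_hammingBall]⟩⟩
  · obtain ⟨u, hu, hyu⟩ := hS y hy
    exact ⟨u, mem_inter.mpr ⟨hu, mem_hammingBall.mpr hyu.le⟩⟩

/-- Truncated subtraction is harmless: for a dominating set `S` every ball meets `S`. -/
def excess (S : Finset (Fin n → Bool)) (y : Fin n → Bool) : ℕ := #(S ∩ hammingBall y) - 1

theorem IsDominatingSet.card_inter_hammingBall_eq (hS : IsDominatingSet (hypercube n) S)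
    (y : Fin n → Bool) : #(S ∩ hammingBall y) = excess S y + 1 :=
  (Nat.sub_add_cancel (card_pos.mpr (hS.inter_hammingBall_nonempty y))).symm

theorem IsDominatingSet.sum_excess_add_two_pow (hS : IsDominatingSet (hypercube n) S) :
    ∑ y, excess S y + 2 ^ n = #S * (n + 1) := by
  have h := sum_card_inter_hammingBall S
  simp only [hS.card_inter_hammingBall_eq, sum_add_distrib, sum_const, card_univ,
    Fintype.card_fin, smul_eq_mul, mul_one, Fintype.card_fun, Fintype.card_bool] at h
  exact h

theorem IsDominatingSet.one_le_sum_excess (hn : Even n) (hS : IsDominatingSet (hypercube n) S)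
    {x : Fin n → Bool} (hx : x ∉ S) : 1 ≤ ∑ y ∈ hammingBall x, excess S y := by
  have h := even_sum_card_inter_hammingBall hx
  simp only [hS.card_inter_hammingBall_eq, sum_add_distrib, sum_const, card_hammingBall,
    Fintype.card_fin, smul_eq_mul, mul_one] at h
  by_contra! h0
  rw [Nat.lt_one_iff.mp h0, zero_add] at h
  exact Nat.not_even_iff_odd.mpr hn.add_one h

theorem IsDominatingSet.card_compl_inter_mul_excess_add_le
    (hS : IsDominatingSet (hypercube n) S) (y : Fin n → Bool) :
    #(Sᶜ ∩ hammingBall y) * excess S y + excess S y ≤ n * excess S y := by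
  have hsplit := card_sdiff_add_card_inter (hammingBall y) S
  rw [sdiff_eq_inter_compl, inter_comm, inter_comm _ S, card_hammingBall, Fintype.card_fin,
    hS.card_inter_hammingBall_eq] at hsplit
  rw [← add_one_mul]
  rcases Nat.eq_zero_or_pos (excess S y) with h0 | h0
  · simp [h0]
  · exact Nat.mul_le_mul_right _ (by omega)

theorem IsDominatingSet.card_le_sum_excess (hn : Even n) (hn₀ : n ≠ 0)
    (hS : IsDominatingSet (hypercube n) S) : #S ≤ ∑ y, excess S y := by
  have hcount : #Sᶜ ≤ ∑ y, #(Sᶜ ∩ hammingBall y) * excess S y :=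
    calc #Sᶜ = ∑ x ∈ Sᶜ, 1 := card_eq_sum_ones _
      _ ≤ ∑ x ∈ Sᶜ, ∑ y ∈ hammingBall x, excess S y :=
        sum_le_sum fun x hx => hS.one_le_sum_excess hn (mem_compl.mp hx)
      _ = ∑ y, #(Sᶜ ∩ hammingBall y) * excess S y := sum_sum_hammingBall _ _
  have hcompl : #Sᶜ + #S = 2 ^ n := by simp [card_compl_add_card]
  have hsum := hS.sum_excess_add_two_pow
  refine Nat.le_of_mul_le_mul_left ?_ (Nat.pos_of_ne_zero hn₀)
  calc n * #S = #Sᶜ + ∑ y, excess S y := by linarith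
    _ ≤ ∑ y, (#(Sᶜ ∩ hammingBall y) * excess S y + excess S y) := by
      rw [sum_add_distrib]; omega
    _ ≤ ∑ y, n * excess S y := sum_le_sum fun y _ => hS.card_compl_inter_mul_excess_add_le y
    _ = n * ∑ y, excess S y := (mul_sum _ _ _).symm

theorem IsDominatingSet.two_pow_le_mul_card_hypercube (hn : Even n) (hn₀ : n ≠ 0)
    (hS : IsDominatingSet (hypercube n) S) : 2 ^ n ≤ n * #S := by
  linarith [hS.card_le_sum_excess hn hn₀, hS.sum_excess_add_two_pow]

end LowerBound

section Construction

variable {n : ℕ} {W : Type*} [AddCommGroup W] [Module Bool W] [DecidableEq W]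

theorem isDominatingSet_hypercube_ker_linearCombination (v : Fin n → W)
    (hv : Function.Surjective v) :
    IsDominatingSet (hypercube n) {x | Fintype.linearCombination Bool v x = 0} := by
  intro x hx
  obtain ⟨i, hi⟩ := hv (Fintype.linearCombination Bool v x)
  refine ⟨x + Pi.single i 1, ?_, ?_⟩
  · rw [mem_filter, map_add, Fintype.linearCombination_apply_single, one_smul, hi,
      add_self_eq_zero_of_module_bool]
    exact ⟨mem_univ _, rfl⟩
  · change hammingDist x (x + Pi.single i 1) = 1
    rw [hammingDist_eq_hammingNorm, neg_add_cancel_left, hammingNorm_single_one]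

theorem card_ker_linearCombination_mul_card [Fintype W] (v : Fin n → W)
    (hv : Function.Surjective v) :
    #{x | Fintype.linearCombination Bool v x = 0} * Fintype.card W = 2 ^ n := by
  have h := card_filter_eq_zero_mul_card_of_surjective (Fintype.linearCombination Bool v)
    fun w => ?_
  · simpa using h
  · obtain ⟨i, rfl⟩ := hv w
    exact ⟨Pi.single i 1, by simp⟩

end Construction

theorem dominationNumber_eq_of_forall_le {V : Type*} {G : SimpleGraph V} {m : ℕ}
    (h : ∃ S, IsDominatingSet G S ∧ #S = m) (hle : ∀ S, IsDominatingSet G S → m ≤ #S) :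
    dominationNumber G = m := by
  refine le_antisymm (Nat.sInf_le h) (le_csInf ⟨m, h⟩ ?_)
  rintro _ ⟨S, hS, rfl⟩
  exact hle S hS

/-- For every `k ≥ 1`, `γ(Q_{2^k}) = 2^(2^k - k)`. -/
theorem domination_hypercube_pow (k : ℕ) (hk : 1 ≤ k) :
    dominationNumber (hypercube (2 ^ k)) = 2 ^ (2 ^ k - k) := by
  have hpow : 2 ^ (2 ^ k) = 2 ^ (2 ^ k - k) * 2 ^ k := by
    rw [← pow_add, Nat.sub_add_cancel Nat.lt_two_pow_self.le]
  refine dominationNumber_eq_of_forall_le ?_ fun S hS => ?_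
  · have e : Fin (2 ^ k) ≃ (Fin k → Bool) := Fintype.equivOfCardEq (by simp)
    refine ⟨_, isDominatingSet_hypercube_ker_linearCombination e e.surjective, ?_⟩
    have h := card_ker_linearCombination_mul_card e e.surjective
    rw [Fintype.card_fun, Fintype.card_bool, Fintype.card_fin, hpow] at h
    exact Nat.eq_of_mul_eq_mul_right (by positivity) h
  · have h := hS.two_pow_le_mul_card_hypercube (Nat.even_pow.mpr ⟨even_two, by omega⟩)
      (by positivity)
    rw [hpow, mul_comm] at h
    exact Nat.le_of_mul_le_mul_left h (by positivity)
end

section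
/- For every integer n ≥ 1, the total domination number of the n-dimensional hypercube equals its total restrained domination number: γ_t(Q_n) = γ_tr(Q_n). -/
open SimpleGraph

/-- `S` is a total restrained dominating set of `G`: every vertex is adjacent to a vertex
of `S`, and every vertex outside `S` has a neighbor outside `S`. -/
def IsTotalRestrainedDominatingSet {V : Type*} (G : SimpleGraph V) (S : Finset V) : Prop :=
  (∀ v : V, ∃ u ∈ S, G.Adj v u) ∧ ∀ v : V, v ∉ S → ∃ u : V, u ∉ S ∧ G.Adj v u

/-- The total restrained domination number of `G`. -/
noncomputable def totalRestrainedDominationNumber {V : Type*} (G : SimpleGraph V) : ℕ :=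
  sInf {n : ℕ | ∃ S : Finset V, IsTotalRestrainedDominatingSet G S ∧ S.card = n}

/-!
Let `S` be a total dominating set of `Q_n` of minimum size and suppose some `v ∉ S` has all its
neighbours in `S`. For `n = 1` this is impossible outright: the unique neighbour of `v` can only be
dominated by `v`. For `n ≥ 2`, delete one neighbour `u = v + e_i` from `S`. The vertex `v` is still
dominated by another neighbour `v + e_j`, and every other vertex `v + e_i + e_j` that `u` dominated
is also dominated by `v + e_j ∈ S`. This contradicts minimality, so a minimum total dominating set
of `Q_n` is automatically restrained.
-/

open Function

section TotalDomination

variable {V : Type*} {G : SimpleGraph V}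

theorem exists_isTotalDominatingSet_card_eq_totalDominationNumber [Fintype V]
    (h : ∀ v, ∃ u, G.Adj v u) :
    ∃ S : Finset V, IsTotalDominatingSet G S ∧ S.card = totalDominationNumber G :=
  Nat.sInf_mem (s := {m | ∃ S : Finset V, IsTotalDominatingSet G S ∧ S.card = m})
    ⟨_, Finset.univ, fun v => (h v).imp fun u hu => ⟨Finset.mem_univ u, hu⟩, rfl⟩

theorem totalDominationNumber_eq_totalRestrainedDominationNumber_of_card_eq {S : Finset V}
    (hS : IsTotalRestrainedDominatingSet G S) (hcard : S.card = totalDominationNumber G) :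
    totalDominationNumber G = totalRestrainedDominationNumber G := by
  refine le_antisymm ?_ (hcard ▸ Nat.sInf_le ⟨S, hS, rfl⟩)
  obtain ⟨T, hT, hTcard⟩ := Nat.sInf_mem (s := {m | ∃ T : Finset V,
    IsTotalRestrainedDominatingSet G T ∧ T.card = m}) ⟨_, S, hS, rfl⟩
  calc totalDominationNumber G ≤ T.card := Nat.sInf_le ⟨T, hT.1, rfl⟩
    _ = totalRestrainedDominationNumber G := hTcard

theorem IsTotalDominatingSet.isTotalRestrainedDominatingSet_of_adj_unique
    (hG : ∀ u x y, G.Adj u x → G.Adj u y → x = y) {S : Finset V}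
    (hS : IsTotalDominatingSet G S) : IsTotalRestrainedDominatingSet G S := by
  refine ⟨hS, fun v hv => absurd ?_ hv⟩
  obtain ⟨u, -, hvu⟩ := hS v
  obtain ⟨x, hxS, hux⟩ := hS u
  rwa [hG u x v hux hvu.symm] at hxS

theorem IsTotalDominatingSet.erase_of_forall_adj_mem [DecidableEq V]
    (hdeg : ∀ v u, G.Adj v u → ∃ w ≠ u, G.Adj v w)
    (hcommon : ∀ v u x, G.Adj v u → G.Adj u x → x ≠ v → ∃ w ≠ u, G.Adj v w ∧ G.Adj w x)
    {S : Finset V} (hS : IsTotalDominatingSet G S) {v u : V} (hvS : ∀ w, G.Adj v w → w ∈ S)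
    (hvu : G.Adj v u) : IsTotalDominatingSet G (S.erase u) := by
  intro x
  obtain ⟨y, hyS, hxy⟩ := hS x
  by_cases hyu : y = u
  · subst hyu
    by_cases hxv : x = v
    · subst hxv
      obtain ⟨w, hwy, hxw⟩ := hdeg x y hvu
      exact ⟨w, Finset.mem_erase.2 ⟨hwy, hvS w hxw⟩, hxw⟩
    · obtain ⟨w, hwy, hvw, hwx⟩ := hcommon v y x hvu hxy.symm hxv
      exact ⟨w, Finset.mem_erase.2 ⟨hwy, hvS w hvw⟩, hwx.symm⟩
  · exact ⟨y, Finset.mem_erase.2 ⟨hyu, hyS⟩, hxy⟩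

theorem IsTotalDominatingSet.isTotalRestrainedDominatingSet_of_card_eq
    (hdeg : ∀ v u, G.Adj v u → ∃ w ≠ u, G.Adj v w)
    (hcommon : ∀ v u x, G.Adj v u → G.Adj u x → x ≠ v → ∃ w ≠ u, G.Adj v w ∧ G.Adj w x)
    {S : Finset V} (hS : IsTotalDominatingSet G S) (hcard : S.card = totalDominationNumber G) :
    IsTotalRestrainedDominatingSet G S := by
  classical
  refine ⟨hS, fun v hv => ?_⟩
  by_contra! hN
  have hvS : ∀ w, G.Adj v w → w ∈ S := fun w hvw => by_contra fun hw => hN w hw hvw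
  obtain ⟨u, huS, hvu⟩ := hS v
  have hle : totalDominationNumber G ≤ (S.erase u).card :=
    Nat.sInf_le ⟨_, hS.erase_of_forall_adj_mem hdeg hcommon hvS hvu, rfl⟩
  rw [Finset.card_erase_of_mem huS] at hle
  have hpos : 0 < S.card := Finset.card_pos.2 ⟨u, huS⟩
  omega

end TotalDomination

theorem hammingDist_eq_one_iff {ι : Type*} {β : ι → Type*} [Fintype ι] [∀ i, DecidableEq (β i)]
    {x y : ∀ i, β i} : hammingDist x y = 1 ↔ ∃ i, x i ≠ y i ∧ ∀ j ≠ i, x j = y j := by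
  simp only [hammingDist, Finset.card_eq_one, Finset.eq_singleton_iff_unique_mem,
    Finset.mem_filter, Finset.mem_univ, true_and]
  refine exists_congr fun i => and_congr_right fun _ => forall_congr' fun j => ?_
  exact not_imp_comm

section Hypercube

variable {n : ℕ}

theorem hypercube_adj_iff {x y : Fin n → Bool} :
    (hypercube n).Adj x y ↔ ∃ i, y = update x i (!x i) := by
  change hammingDist x y = 1 ↔ _
  rw [hammingDist_eq_one_iff]
  simp [eq_update_iff, Bool.eq_not, eq_comm]

theorem hypercube_adj_update (x : Fin n → Bool) (i : Fin n) :
    (hypercube n).Adj x (update x i (!x i)) :=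
  hypercube_adj_iff.2 ⟨i, rfl⟩

theorem hypercube_exists_adj (hn : 1 ≤ n) (x : Fin n → Bool) : ∃ y, (hypercube n).Adj x y :=
  ⟨_, hypercube_adj_update x ⟨0, hn⟩⟩

theorem hypercube_one_adj_unique (u x y : Fin 1 → Bool) (hx : (hypercube 1).Adj u x)
    (hy : (hypercube 1).Adj u y) : x = y := by
  obtain ⟨i, rfl⟩ := hypercube_adj_iff.1 hx
  obtain ⟨j, rfl⟩ := hypercube_adj_iff.1 hy
  rw [Subsingleton.elim i j]

theorem hypercube_exists_adj_ne (hn : 2 ≤ n) (v u : Fin n → Bool) (hvu : (hypercube n).Adj v u) :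
    ∃ w ≠ u, (hypercube n).Adj v w := by
  obtain ⟨i, rfl⟩ := hypercube_adj_iff.1 hvu
  have : Nontrivial (Fin n) := Fin.nontrivial_iff_two_le.2 hn
  obtain ⟨j, hji⟩ := exists_ne i
  refine ⟨update v j (!v j), fun h => ?_, hypercube_adj_update v j⟩
  simpa [hji.symm] using congrFun h i

theorem hypercube_exists_common_adj_ne (v u x : Fin n → Bool) (hvu : (hypercube n).Adj v u)
    (hux : (hypercube n).Adj u x) (hxv : x ≠ v) :
    ∃ w ≠ u, (hypercube n).Adj v w ∧ (hypercube n).Adj w x := by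
  obtain ⟨i, rfl⟩ := hypercube_adj_iff.1 hvu
  obtain ⟨j, rfl⟩ := hypercube_adj_iff.1 hux
  have hji : j ≠ i := by
    rintro rfl
    simp at hxv
  refine ⟨update v j (!v j), fun h => ?_, hypercube_adj_update v j, hypercube_adj_iff.2 ⟨i, ?_⟩⟩
  · simpa [hji.symm] using congrFun h i
  · rw [update_of_ne hji, update_of_ne hji.symm, update_comm hji.symm]

end Hypercube

/-- For every `n ≥ 1`, `γ_t(Q_n) = γ_tr(Q_n)`. -/
theorem totalDomination_eq_totalRestrainedDomination_hypercube (n : ℕ) (hn : 1 ≤ n) :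
    totalDominationNumber (hypercube n) = totalRestrainedDominationNumber (hypercube n) := by
  obtain ⟨S, hS, hcard⟩ :=
    exists_isTotalDominatingSet_card_eq_totalDominationNumber (hypercube_exists_adj hn)
  refine totalDominationNumber_eq_totalRestrainedDominationNumber_of_card_eq ?_ hcard
  obtain rfl | hn2 := hn.eq_or_lt
  · exact hS.isTotalRestrainedDominatingSet_of_adj_unique hypercube_one_adj_unique
  · exact hS.isTotalRestrainedDominatingSet_of_card_eq (hypercube_exists_adj_ne hn2)
      hypercube_exists_common_adj_ne hcard
end

section
/- For each integer k ≥ 1, there exists a finite connected graph G_k such that 2·γ(G_k) − γ_t(G_k □ K₂) = k. -/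
open SimpleGraph

/-! `G_k` is the rooted product of the path on `k` vertices with the gadget `Q`: a `5`-cycle
`0-1-2-3-4` with a pendant path `0-5-6`, rooted at `0`. A vertex of a copy of `Q` other than its
root only sees its own copy, so every dominating set of `G_k` (every total dominating set of
`G_k □ K₂`) must dominate `Q - 0` (`(Q - 0) □ K₂`) inside each copy. Give `Q` the weights `0` at
the root, `2` at the leaf `6` and `1` elsewhere: every closed neighbourhood of `Q`, and hence every
open neighbourhood of `Q □ K₂`, has weight at most `3`, while `Q - 0` has weight `7`. So each copy
carries at least `⌈7/3⌉ = 3` vertices of a dominating set and `⌈14/3⌉ = 5` of a total dominating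
set of the prism, and both bounds are attained. Hence `γ(G_k) = 3k` and `γₜ(G_k □ K₂) = 5k`. -/

open Finset

instance SimpleGraph.boxProdDecidableAdj {α β : Type*} {G : SimpleGraph α} {H : SimpleGraph β}
    [DecidableEq α] [DecidableEq β] [DecidableRel G.Adj] [DecidableRel H.Adj] :
    DecidableRel (G □ H).Adj :=
  fun _ _ => decidable_of_iff' _ boxProd_adj

theorem sum_le_mul_card_of_forall_exists_rel {V : Type*} [Fintype V] (rel : V → V → Prop)
    [DecidableRel rel] (wt : V → ℕ) {m : ℕ} (hm : ∀ u, ∑ v with rel v u, wt v ≤ m)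
    {D : Finset V} (hD : ∀ v, wt v ≠ 0 → ∃ u ∈ D, rel v u) : ∑ v, wt v ≤ m * #D :=
  calc ∑ v, wt v ≤ ∑ v, ∑ u ∈ D with rel v u, wt v := by
        refine sum_le_sum fun v _ => ?_
        obtain h | h := eq_or_ne (wt v) 0
        · simp [h]
        obtain ⟨u, hu, huv⟩ := hD v h
        exact single_le_sum (f := fun _ => wt v) (fun _ _ => Nat.zero_le _) (mem_filter.2 ⟨hu, huv⟩)
    _ = ∑ u ∈ D, ∑ v with rel v u, wt v := by simp only [sum_filter]; exact sum_comm
    _ ≤ ∑ _u ∈ D, m := sum_le_sum fun u _ => hm u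
    _ = m * #D := by rw [sum_const, smul_eq_mul, mul_comm]

theorem dominationNumber_eq {V : Type*} {G : SimpleGraph V} {S : Finset V}
    (hS : IsDominatingSet G S) (hmin : ∀ S', IsDominatingSet G S' → #S ≤ #S') :
    dominationNumber G = #S :=
  IsLeast.csInf_eq ⟨⟨S, hS, rfl⟩, by rintro _ ⟨S', hS', rfl⟩; exact hmin S' hS'⟩

theorem totalDominationNumber_eq {V : Type*} {G : SimpleGraph V} {S : Finset V}
    (hS : IsTotalDominatingSet G S) (hmin : ∀ S', IsTotalDominatingSet G S' → #S ≤ #S') :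
    totalDominationNumber G = #S :=
  IsLeast.csInf_eq ⟨⟨S, hS, rfl⟩, by rintro _ ⟨S', hS', rfl⟩; exact hmin S' hS'⟩

namespace SimpleGraph

variable {ι W : Type*} (T : SimpleGraph ι) (H : SimpleGraph W) (r : W)

def rootedProduct : SimpleGraph (ι × W) where
  Adj x y := x.1 = y.1 ∧ H.Adj x.2 y.2 ∨ x.2 = r ∧ y.2 = r ∧ T.Adj x.1 y.1
  symm := by
    constructor
    rintro x y (⟨h, h'⟩ | ⟨h, h', h''⟩)
    exacts [Or.inl ⟨h.symm, h'.symm⟩, Or.inr ⟨h', h, h''.symm⟩]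
  loopless := by
    constructor
    rintro x (⟨-, h⟩ | ⟨-, -, h⟩)
    exacts [H.irrefl h, T.irrefl h]

variable {T H r}

theorem rootedProduct_adj_of_ne_root {c : ι} {w : W} {y : ι × W} (hw : w ≠ r) :
    (rootedProduct T H r).Adj (c, w) y ↔ y.1 = c ∧ H.Adj w y.2 := by
  refine ⟨?_, fun ⟨hc, h⟩ => Or.inl ⟨hc.symm, h⟩⟩
  rintro (⟨hc, h⟩ | ⟨hr, -⟩)
  exacts [⟨hc.symm, h⟩, absurd hr hw]

theorem Connected.rootedProduct (hT : T.Connected) (hH : H.Connected) :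
    (SimpleGraph.rootedProduct T H r).Connected := by
  have hcopy (c : ι) (w : W) : (SimpleGraph.rootedProduct T H r).Reachable (c, r) (c, w) :=
    (hH r w).map ⟨fun w => (c, w), fun h => Or.inl ⟨rfl, h⟩⟩
  have hroot (c c' : ι) : (SimpleGraph.rootedProduct T H r).Reachable (c, r) (c', r) :=
    (hT c c').map ⟨fun c => (c, r), fun h => Or.inr ⟨rfl, rfl, h⟩⟩
  exact (connected_iff _).2 ⟨fun x y => (hcopy x.1 x.2).symm.trans
    ((hroot x.1 y.1).trans (hcopy y.1 y.2)), hT.nonempty.map (·, r)⟩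

end SimpleGraph

open SimpleGraph

section RootedProduct

variable {ι W κ : Type*} [Fintype ι] {T : SimpleGraph ι} {H : SimpleGraph W} {r : W}

theorem mul_card_le_card_of_isDominatingSet_rootedProduct {a : ℕ}
    (ha : ∀ D : Finset W, (∀ w ≠ r, w ∉ D → ∃ u ∈ D, H.Adj w u) → a ≤ #D)
    {S : Finset (ι × W)} (hS : IsDominatingSet (rootedProduct T H r) S) :
    a * Fintype.card ι ≤ #S := by
  classical
  rw [← card_univ]
  refine mul_card_image_le_card_of_maps_to (f := Prod.fst) (fun _ _ => mem_univ _) a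
    fun c _ => (ha ({x ∈ S | x.1 = c}.image Prod.snd) fun w hw hwS => ?_).trans card_image_le
  obtain ⟨u, huS, hu⟩ := hS (c, w) fun h => hwS (mem_image.2 ⟨_, mem_filter.2 ⟨h, rfl⟩, rfl⟩)
  obtain ⟨hc, hadj⟩ := (rootedProduct_adj_of_ne_root hw).1 hu
  exact ⟨u.2, mem_image.2 ⟨u, mem_filter.2 ⟨huS, hc⟩, rfl⟩, hadj⟩

theorem mul_card_le_card_of_isTotalDominatingSet_boxProd_rootedProduct {K : SimpleGraph κ}
    {b : ℕ} (hb : ∀ R : Finset (W × κ), (∀ w ≠ r, ∀ s, ∃ u ∈ R, (H □ K).Adj (w, s) u) → b ≤ #R)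
    {S : Finset ((ι × W) × κ)} (hS : IsTotalDominatingSet (rootedProduct T H r □ K) S) :
    b * Fintype.card ι ≤ #S := by
  classical
  rw [← card_univ]
  refine mul_card_image_le_card_of_maps_to (f := fun x => x.1.1) (fun _ _ => mem_univ _) b
    fun c _ => (hb ({x ∈ S | x.1.1 = c}.image fun x => (x.1.2, x.2)) fun w hw s => ?_).trans
      card_image_le
  obtain ⟨u, huS, hu⟩ := hS ((c, w), s)
  rcases boxProd_adj.1 hu with ⟨hG, rfl⟩ | ⟨hK, he⟩
  · obtain ⟨hc, hadj⟩ := (rootedProduct_adj_of_ne_root hw).1 hG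
    exact ⟨_, mem_image.2 ⟨u, mem_filter.2 ⟨huS, hc⟩, rfl⟩, boxProd_adj.2 (Or.inl ⟨hadj, rfl⟩)⟩
  · exact ⟨_, mem_image.2 ⟨u, mem_filter.2 ⟨huS, congrArg Prod.fst he.symm⟩, rfl⟩,
      boxProd_adj.2 (Or.inr ⟨hK, congrArg Prod.snd he⟩)⟩

theorem isDominatingSet_rootedProduct {D : Finset W} (hD : IsDominatingSet H D) :
    IsDominatingSet (rootedProduct T H r) (univ ×ˢ D) := by
  rintro ⟨c, w⟩ hw
  obtain ⟨u, hu, hwu⟩ := hD w fun h => hw (mem_product.2 ⟨mem_univ c, h⟩)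
  exact ⟨(c, u), mem_product.2 ⟨mem_univ c, hu⟩, Or.inl ⟨rfl, hwu⟩⟩

theorem isTotalDominatingSet_boxProd_rootedProduct {K : SimpleGraph κ} {R : Finset (W × κ)}
    (hR : IsTotalDominatingSet (H □ K) R) :
    IsTotalDominatingSet (rootedProduct T H r □ K)
      ((univ ×ˢ R).map (Equiv.prodAssoc ι W κ).symm.toEmbedding) := by
  rintro ⟨⟨c, w⟩, s⟩
  obtain ⟨⟨w', s'⟩, hu, hadj⟩ := hR (w, s)
  refine ⟨((c, w'), s'), mem_map_equiv.2 (mem_product.2 ⟨mem_univ c, hu⟩), ?_⟩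
  rcases boxProd_adj.1 hadj with ⟨h, rfl⟩ | ⟨h, rfl⟩
  exacts [boxProd_adj.2 (Or.inl ⟨Or.inl ⟨rfl, h⟩, rfl⟩), boxProd_adj.2 (Or.inr ⟨h, rfl⟩)]

theorem dominationNumber_rootedProduct {D : Finset W} (hD : IsDominatingSet H D)
    (hmin : ∀ D' : Finset W, (∀ w ≠ r, w ∉ D' → ∃ u ∈ D', H.Adj w u) → #D ≤ #D') :
    dominationNumber (rootedProduct T H r) = #D * Fintype.card ι := by
  have hcard : #((univ : Finset ι) ×ˢ D) = #D * Fintype.card ι := by rw [card_product, card_univ, mul_comm]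
  rw [← hcard]
  exact dominationNumber_eq (isDominatingSet_rootedProduct hD) fun S hS =>
    hcard ▸ mul_card_le_card_of_isDominatingSet_rootedProduct hmin hS

theorem totalDominationNumber_boxProd_rootedProduct {K : SimpleGraph κ} {R : Finset (W × κ)}
    (hR : IsTotalDominatingSet (H □ K) R)
    (hmin : ∀ R' : Finset (W × κ), (∀ w ≠ r, ∀ s, ∃ u ∈ R', (H □ K).Adj (w, s) u) → #R ≤ #R') :
    totalDominationNumber (rootedProduct T H r □ K) = #R * Fintype.card ι := by
  have hcard : #((univ ×ˢ R).map (Equiv.prodAssoc ι W κ).symm.toEmbedding) = #R * Fintype.card ι :=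
    by rw [card_map, card_product, card_univ, mul_comm]
  rw [← hcard]
  exact totalDominationNumber_eq (isTotalDominatingSet_boxProd_rootedProduct hR) fun S hS =>
    hcard ▸ mul_card_le_card_of_isTotalDominatingSet_boxProd_rootedProduct hmin hS

end RootedProduct

def gadget : SimpleGraph (Fin 7) :=
  fromEdgeSet {s(0, 1), s(1, 2), s(2, 3), s(3, 4), s(4, 0), s(0, 5), s(5, 6)}

instance : DecidableRel gadget.Adj := fun _ _ =>
  decidable_of_iff' _ (fromEdgeSet_adj _)

def gadgetWeight : Fin 7 → ℕ := ![0, 1, 1, 1, 1, 1, 2]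

theorem gadget_connected : gadget.Connected := by decide

theorem three_le_card_of_dominates_gadget (D : Finset (Fin 7))
    (hD : ∀ w ≠ 0, w ∉ D → ∃ u ∈ D, gadget.Adj w u) : 3 ≤ #D := by
  have hsum : ∑ w, gadgetWeight w = 7 := by decide
  have := sum_le_mul_card_of_forall_exists_rel (fun v u => v = u ∨ gadget.Adj v u) gadgetWeight
    (m := 3) (by decide) (D := D) fun w hw => by
      by_cases hwD : w ∈ D
      · exact ⟨w, hwD, Or.inl rfl⟩
      obtain ⟨u, hu, hwu⟩ := hD w (by rintro rfl; exact hw rfl) hwD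
      exact ⟨u, hu, Or.inr hwu⟩
  omega

theorem five_le_card_of_totallyDominates_gadget_boxProd (R : Finset (Fin 7 × Fin 2))
    (hR : ∀ w ≠ 0, ∀ s, ∃ u ∈ R, (gadget □ K2).Adj (w, s) u) : 5 ≤ #R := by
  have hsum : ∑ v : Fin 7 × Fin 2, gadgetWeight v.1 = 14 := by decide
  have := sum_le_mul_card_of_forall_exists_rel (gadget □ K2).Adj (fun v => gadgetWeight v.1)
    (m := 3) (by decide) (D := R) fun v hv => hR v.1 (fun h => hv (by rw [h]; rfl)) v.2
  omega

theorem isDominatingSet_gadget : IsDominatingSet gadget {1, 3, 5} := by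
  unfold IsDominatingSet; decide

theorem isTotalDominatingSet_gadget_boxProd :
    IsTotalDominatingSet (gadget □ K2) {(0, 0), (2, 1), (3, 1), (5, 0), (5, 1)} := by
  unfold IsTotalDominatingSet; decide

/-- For each `k ≥ 1`, there exists a finite connected graph `G_k` with
`2 γ(G_k) - γ_t(G_k □ K₂) = k`. -/
theorem exists_connected_graph_prism_gap (k : ℕ) (hk : 1 ≤ k) :
    ∃ (V : Type) (_ : Fintype V) (G : SimpleGraph V), G.Connected ∧
      (2 * dominationNumber G : ℤ) - totalDominationNumber (G □ K2) = k := by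
  obtain ⟨n, rfl⟩ : ∃ n, k = n + 1 := ⟨k - 1, by omega⟩
  refine ⟨Fin (n + 1) × Fin 7, inferInstance, rootedProduct (pathGraph (n + 1)) gadget 0,
    (pathGraph_connected n).rootedProduct gadget_connected, ?_⟩
  rw [dominationNumber_rootedProduct isDominatingSet_gadget three_le_card_of_dominates_gadget,
    totalDominationNumber_boxProd_rootedProduct isTotalDominatingSet_gadget_boxProd
      five_le_card_of_totallyDominates_gadget_boxProd]
  simp only [Fintype.card_fin]
  rw [show #({1, 3, 5} : Finset (Fin 7)) = 3 by rfl,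
    show #({(0, 0), (2, 1), (3, 1), (5, 0), (5, 1)} : Finset (Fin 7 × Fin 2)) = 5 by rfl]
  push_cast
  ring
end

section
/- Let k ≥ 2 and let G_k be the graph on vertices v_1, …, v_{5k} whose edges are, for each i ∈ {1,…,k}, the edges of the 5-cycle v_{5(i−1)+1} v_{5(i−1)+2} v_{5(i−1)+4} v_{5(i−1)+5} v_{5(i−1)+3} v_{5(i−1)+1}, together with the edges v_{5j} v_{5j+1} for each j ∈ {1,…,k−1}. Then the domination number of G_k satisfies γ(G_k) = 2k. -/
open SimpleGraph

/-- The base relation of the graph `G_k`: vertices are `Fin (5*k)`, where index `j`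
corresponds to the vertex `v_{j+1}`. For each `i ∈ {0,…,k-1}` we take the edges of the
5-cycle `v_{5i+1} v_{5i+2} v_{5i+4} v_{5i+5} v_{5i+3} v_{5i+1}`, together with the
connecting edges `v_{5j} v_{5j+1}` for `j ∈ {1,…,k-1}`. -/
def gkRel (k : ℕ) (a b : Fin (5 * k)) : Prop :=
  (∃ i < k,
      (a.val = 5 * i ∧ b.val = 5 * i + 1) ∨
      (a.val = 5 * i + 1 ∧ b.val = 5 * i + 3) ∨
      (a.val = 5 * i + 3 ∧ b.val = 5 * i + 4) ∨
      (a.val = 5 * i + 4 ∧ b.val = 5 * i + 2) ∨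
      (a.val = 5 * i + 2 ∧ b.val = 5 * i)) ∨
  (∃ j, 1 ≤ j ∧ j < k ∧ a.val = 5 * j - 1 ∧ b.val = 5 * j)

/-- The graph `G_k` from the construction: the disjoint union of `k` five-cycles
`F_1, …, F_k` linked by the edges `v_{5j} v_{5j+1}`. -/
def gkGraph (k : ℕ) : SimpleGraph (Fin (5 * k)) := SimpleGraph.fromRel (gkRel k)

lemma gk_adj_val {k : ℕ} {a b : Fin (5 * k)} (h : (gkGraph k).Adj a b) :
    gkRel k a b ∨ gkRel k b a :=
  ((SimpleGraph.fromRel_adj _ _ _).1 h).2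

lemma adj_block {k i r : ℕ} (hi : i < k) (hr1 : 1 ≤ r) (hr3 : r ≤ 3)
    {a u : Fin (5 * k)} (ha : a.val = 5 * i + r) (h : (gkGraph k).Adj a u) :
    (r = 1 ∧ (u.val = 5 * i ∨ u.val = 5 * i + 3)) ∨
    (r = 2 ∧ (u.val = 5 * i ∨ u.val = 5 * i + 4)) ∨
    (r = 3 ∧ (u.val = 5 * i + 1 ∨ u.val = 5 * i + 4)) := by
  have hu := u.isLt
  have h' := gk_adj_val h
  unfold gkRel at h'
  rcases h' with (⟨i', hi', hc⟩ | ⟨j, hj⟩) | (⟨i', hi', hc⟩ | ⟨j, hj⟩) <;> omega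

lemma fiber_two {k : ℕ} {S : Finset (Fin (5 * k))}
    (hS : IsDominatingSet (gkGraph k) S) {i : ℕ} (hi : i < k) :
    2 ≤ (S.filter (fun v => v.val / 5 = i)).card := by
  by_contra hcon
  push_neg at hcon
  have hone : ∀ a ∈ S.filter (fun v => v.val / 5 = i),
      ∀ b ∈ S.filter (fun v => v.val / 5 = i), a = b :=
    Finset.card_le_one.mp (by omega)
  have key : ∀ r, 1 ≤ r → r ≤ 3 → ∃ u ∈ S, u.val / 5 = i ∧
      (u.val = 5 * i + r ∨
       (r = 1 ∧ (u.val = 5 * i ∨ u.val = 5 * i + 3)) ∨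
       (r = 2 ∧ (u.val = 5 * i ∨ u.val = 5 * i + 4)) ∨
       (r = 3 ∧ (u.val = 5 * i + 1 ∨ u.val = 5 * i + 4))) := by
    intro r hr1 hr3
    have hw : 5 * i + r < 5 * k := by omega
    set w : Fin (5 * k) := ⟨5 * i + r, hw⟩ with hwdef
    by_cases hmem : w ∈ S
    · exact ⟨w, hmem, by simp [hwdef]; omega, Or.inl rfl⟩
    · obtain ⟨u, huS, hadj⟩ := hS w hmem
      have hb := adj_block hi hr1 hr3 (a := w) rfl hadj
      exact ⟨u, huS, by omega, by omega⟩
  obtain ⟨u1, hu1, hd1, he1⟩ := key 1 (by omega) (by omega)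
  obtain ⟨u2, hu2, hd2, he2⟩ := key 2 (by omega) (by omega)
  obtain ⟨u3, hu3, hd3, he3⟩ := key 3 (by omega) (by omega)
  have hm1 : u1 ∈ S.filter (fun v => v.val / 5 = i) := Finset.mem_filter.mpr ⟨hu1, hd1⟩
  have hm2 : u2 ∈ S.filter (fun v => v.val / 5 = i) := Finset.mem_filter.mpr ⟨hu2, hd2⟩
  have hm3 : u3 ∈ S.filter (fun v => v.val / 5 = i) := Finset.mem_filter.mpr ⟨hu3, hd3⟩
  have e12 := hone _ hm1 _ hm2
  have e13 := hone _ hm1 _ hm3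
  rw [← e12] at he2
  rw [← e13] at he3
  omega

lemma gk_lower {k : ℕ} {S : Finset (Fin (5 * k))}
    (hS : IsDominatingSet (gkGraph k) S) : 2 * k ≤ S.card := by
  have hcard : S.card = ∑ i ∈ Finset.range k, (S.filter (fun v => v.val / 5 = i)).card :=
    Finset.card_eq_sum_card_fiberwise
      (fun v _ => Finset.mem_range.mpr (by have := v.isLt; omega))
  rw [hcard]
  calc 2 * k = ∑ _i ∈ Finset.range k, 2 := by simp [mul_comm]
    _ ≤ _ := Finset.sum_le_sum fun i hi =>
        fiber_two hS (Finset.mem_range.mp hi)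

/-- The dominating set of size `2k`. -/
def gkDomSet (k : ℕ) : Finset (Fin (5 * k)) :=
  Finset.univ.image (fun p : Fin k × Fin 2 =>
    (⟨5 * p.1 + 1 + p.2, by have := p.1.isLt; have := p.2.isLt; omega⟩ : Fin (5 * k)))

lemma gkDomSet_card (k : ℕ) : (gkDomSet k).card = 2 * k := by
  unfold gkDomSet
  rw [Finset.card_image_of_injective]
  · simp [mul_comm]
  · intro p q hpq
    obtain ⟨⟨a, ha⟩, ⟨b, hb⟩⟩ := p
    obtain ⟨⟨c, hc⟩, ⟨d, hd⟩⟩ := q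
    simp only [Fin.mk.injEq, Prod.mk.injEq] at hpq ⊢
    omega

lemma gkDomSet_mem {k : ℕ} {i : ℕ} (hi : i < k) (j : ℕ) (hj : j < 2)
    {u : Fin (5 * k)} (hu : u.val = 5 * i + 1 + j) : u ∈ gkDomSet k := by
  refine Finset.mem_image.mpr ⟨(⟨i, hi⟩, ⟨j, hj⟩), Finset.mem_univ _, ?_⟩
  exact Fin.ext (by simp [hu])

lemma gkDomSet_dom (k : ℕ) : IsDominatingSet (gkGraph k) (gkDomSet k) := by
  intro v hv
  have hvk := v.isLt
  have hik : v.val / 5 < k := by omega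
  set i := v.val / 5 with hidef
  have hr1 : v.val % 5 ≠ 1 := by
    intro h
    exact hv (gkDomSet_mem hik 0 (by omega) (by omega))
  have hr2 : v.val % 5 ≠ 2 := by
    intro h
    exact hv (gkDomSet_mem hik 1 (by omega) (by omega))
  have hcases : v.val % 5 = 0 ∨ v.val % 5 = 3 ∨ v.val % 5 = 4 := by omega
  rcases hcases with h0 | h3 | h4
  · refine ⟨⟨5 * i + 1, by omega⟩, gkDomSet_mem hik 0 (by omega) rfl, ?_⟩
    refine (SimpleGraph.fromRel_adj _ _ _).2 ⟨?_, Or.inl (Or.inl ⟨i, hik, Or.inl ⟨by omega, rfl⟩⟩)⟩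
    intro hne
    have := congrArg Fin.val hne
    simp at this
    omega
  · refine ⟨⟨5 * i + 1, by omega⟩, gkDomSet_mem hik 0 (by omega) rfl, ?_⟩
    refine (SimpleGraph.fromRel_adj _ _ _).2 ⟨?_, Or.inr (Or.inl ⟨i, hik, Or.inr (Or.inl ⟨rfl, by omega⟩)⟩)⟩
    intro hne
    have := congrArg Fin.val hne
    simp at this
    omega
  · refine ⟨⟨5 * i + 2, by omega⟩, gkDomSet_mem hik 1 (by omega) rfl, ?_⟩
    refine (SimpleGraph.fromRel_adj _ _ _).2 ⟨?_, Or.inl (Or.inl ⟨i, hik,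
      Or.inr (Or.inr (Or.inr (Or.inl ⟨by omega, rfl⟩)))⟩)⟩
    intro hne
    have := congrArg Fin.val hne
    simp at this
    omega

/-- For `k ≥ 2`, the domination number of `G_k` is `2k`. -/
theorem domination_gkGraph (k : ℕ) (hk : 2 ≤ k) :
    dominationNumber (gkGraph k) = 2 * k := by
  have hmem : 2 * k ∈ {n : ℕ | ∃ S : Finset (Fin (5 * k)), IsDominatingSet (gkGraph k) S ∧ S.card = n} :=
    ⟨gkDomSet k, gkDomSet_dom k, gkDomSet_card k⟩
  apply le_antisymm
  · exact Nat.sInf_le hmem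
  · apply le_csInf ⟨2 * k, hmem⟩
    rintro n ⟨S, hS, rfl⟩
    exact gk_lower hS
end

section
/- Let k ≥ 2 and let G_k be the graph on vertices v_1, …, v_{5k} whose edges are, for each i ∈ {1,…,k}, the edges of the 5-cycle v_{5(i−1)+1} v_{5(i−1)+2} v_{5(i−1)+4} v_{5(i−1)+5} v_{5(i−1)+3} v_{5(i−1)+1}, together with the edges v_{5j} v_{5j+1} for each j ∈ {1,…,k−1}. Then the total domination number of the prism of G_k satisfies γ_t(G_k □ K₂) = 3k. -/
open SimpleGraph

/-! ### Auxiliary definitions -/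

/-- The vertex of `Fin (5*k)` with value `n` (for `n < 5*k`). -/
def pv (k : ℕ) (hk : 0 < k) (n : ℕ) : Fin (5 * k) := ⟨n % (5 * k), Nat.mod_lt _ (by omega)⟩

lemma pv_val {k : ℕ} (hk : 0 < k) {n : ℕ} (hn : n < 5 * k) : (pv k hk n).val = n :=
  Nat.mod_eq_of_lt hn

def layer (i : ℕ) : Fin 2 := ⟨i % 2, Nat.mod_lt _ (by omega)⟩
def olayer (i : ℕ) : Fin 2 := ⟨(i + 1) % 2, Nat.mod_lt _ (by omega)⟩

lemma layer_ne_olayer (i : ℕ) : layer i ≠ olayer i := by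
  simp only [layer, olayer, Ne, Fin.mk.injEq]; omega

/-- Adjacency generator for `gkGraph`. -/
lemma gk_adj_nat {k : ℕ} (hk : 0 < k) {m n : ℕ} (hm : m < 5 * k) (hn : n < 5 * k)
    (h : (∃ i < k,
      (m = 5 * i ∧ n = 5 * i + 1) ∨ (m = 5 * i + 1 ∧ n = 5 * i + 3) ∨
      (m = 5 * i + 3 ∧ n = 5 * i + 4) ∨ (m = 5 * i + 4 ∧ n = 5 * i + 2) ∨
      (m = 5 * i + 2 ∧ n = 5 * i)) ∨
      (∃ j, 1 ≤ j ∧ j < k ∧ m = 5 * j - 1 ∧ n = 5 * j)) :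
    (gkGraph k).Adj (pv k hk m) (pv k hk n) := by
  have hmn : m ≠ n := by
    rcases h with ⟨i, hi, h⟩ | ⟨j, hj1, hj2, h1, h2⟩ <;> omega
  refine (SimpleGraph.fromRel_adj _ _ _).mpr ⟨?_, Or.inl ?_⟩
  · intro he
    have := congrArg Fin.val he
    rw [pv_val hk hm, pv_val hk hn] at this
    exact hmn this
  · unfold gkRel
    rw [pv_val hk hm, pv_val hk hn]
    exact h

lemma prism_adj_layer {k : ℕ} {a b : Fin (5 * k)} (h : (gkGraph k).Adj a b) (t : Fin 2) :
    (gkGraph k □ K2).Adj (a, t) (b, t) :=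
  SimpleGraph.boxProd_adj.mpr (Or.inl ⟨h, rfl⟩)

lemma prism_adj_rung {k : ℕ} (a : Fin (5 * k)) {t t' : Fin 2} (h : t ≠ t') :
    (gkGraph k □ K2).Adj (a, t) (a, t') :=
  SimpleGraph.boxProd_adj.mpr (Or.inr ⟨(SimpleGraph.top_adj t t').mpr h, rfl⟩)

/-! ### The construction (upper bound) -/

def f0 (k : ℕ) (hk : 0 < k) (i : ℕ) : Fin (5 * k) × Fin 2 := (pv k hk (5 * i), layer i)
def f1 (k : ℕ) (hk : 0 < k) (i : ℕ) : Fin (5 * k) × Fin 2 :=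
  if i < k - 1 then (pv k hk (5 * i + 1), layer i) else (pv k hk (5 * i + 3), olayer i)
def f2 (k : ℕ) (hk : 0 < k) (i : ℕ) : Fin (5 * k) × Fin 2 := (pv k hk (5 * i + 4), olayer i)

def bigS (k : ℕ) (hk : 0 < k) : Finset (Fin (5 * k) × Fin 2) :=
  ((Finset.range k).image (f0 k hk)) ∪ ((Finset.range k).image (f1 k hk)) ∪
    ((Finset.range k).image (f2 k hk))

lemma bigS_card (k : ℕ) (hk : 0 < k) : (bigS k hk).card = 3 * k := by
  classical
  have hf0 : ∀ i, i < k → (f0 k hk i).1.val = 5 * i := fun i hi => pv_val hk (by omega)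
  have hf1 : ∀ i, i < k → (f1 k hk i).1.val = 5 * i + 1 ∨ (f1 k hk i).1.val = 5 * i + 3 := by
    intro i hi; unfold f1; split
    · exact Or.inl (pv_val hk (by omega))
    · exact Or.inr (pv_val hk (by omega))
  have hf2 : ∀ i, i < k → (f2 k hk i).1.val = 5 * i + 4 := fun i hi => pv_val hk (by omega)
  have inj0 : Set.InjOn (f0 k hk) (Finset.range k) := by
    intro i hi j hj he
    simp only [Finset.coe_range, Set.mem_Iio] at hi hj
    have h1 := hf0 i hi; have h2 := hf0 j hj
    have h3 := congrArg (fun x => (Prod.fst x).val) he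
    omega
  have inj1 : Set.InjOn (f1 k hk) (Finset.range k) := by
    intro i hi j hj he
    simp only [Finset.coe_range, Set.mem_Iio] at hi hj
    have h1 := hf1 i hi; have h2 := hf1 j hj
    have h3 := congrArg (fun x => (Prod.fst x).val) he
    omega
  have inj2 : Set.InjOn (f2 k hk) (Finset.range k) := by
    intro i hi j hj he
    simp only [Finset.coe_range, Set.mem_Iio] at hi hj
    have h1 := hf2 i hi; have h2 := hf2 j hj
    have h3 := congrArg (fun x => (Prod.fst x).val) he
    omega
  have d01 : Disjoint ((Finset.range k).image (f0 k hk)) ((Finset.range k).image (f1 k hk)) := by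
    rw [Finset.disjoint_left]; rintro a ha hb
    obtain ⟨i, hi, rfl⟩ := Finset.mem_image.mp ha
    obtain ⟨j, hj, he⟩ := Finset.mem_image.mp hb
    rw [Finset.mem_range] at hi hj
    have h1 := hf0 i hi; have h2 := hf1 j hj
    have h3 := congrArg (fun x => (Prod.fst x).val) he
    omega
  have d2 : Disjoint (((Finset.range k).image (f0 k hk)) ∪ ((Finset.range k).image (f1 k hk)))
      ((Finset.range k).image (f2 k hk)) := by
    rw [Finset.disjoint_left]; rintro a ha hb
    obtain ⟨j, hj, he⟩ := Finset.mem_image.mp hb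
    rw [Finset.mem_range] at hj
    have h2 := hf2 j hj
    rcases Finset.mem_union.mp ha with ha | ha <;>
      obtain ⟨i, hi, rfl⟩ := Finset.mem_image.mp ha <;> rw [Finset.mem_range] at hi
    · have h1 := hf0 i hi
      have h3 := congrArg (fun x => (Prod.fst x).val) he
      omega
    · have h1 := hf1 i hi
      have h3 := congrArg (fun x => (Prod.fst x).val) he
      omega
  rw [bigS, Finset.card_union_of_disjoint d2, Finset.card_union_of_disjoint d01,
    Finset.card_image_of_injOn inj0, Finset.card_image_of_injOn inj1,
    Finset.card_image_of_injOn inj2, Finset.card_range]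
  ring

section
variable {k : ℕ} (hk : 0 < k)

lemma mem_bigS_f0 {i : ℕ} (hi : i < k) : (pv k hk (5 * i), layer i) ∈ bigS k hk := by
  refine Finset.mem_union.mpr (Or.inl (Finset.mem_union.mpr (Or.inl ?_)))
  exact Finset.mem_image.mpr ⟨i, Finset.mem_range.mpr hi, rfl⟩

lemma mem_bigS_f1a {i : ℕ} (hi : i < k - 1) :
    (pv k hk (5 * i + 1), layer i) ∈ bigS k hk := by
  refine Finset.mem_union.mpr (Or.inl (Finset.mem_union.mpr (Or.inr ?_)))
  refine Finset.mem_image.mpr ⟨i, Finset.mem_range.mpr (by omega), ?_⟩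
  unfold f1; rw [if_pos hi]

lemma mem_bigS_f1b : (pv k hk (5 * (k - 1) + 3), olayer (k - 1)) ∈ bigS k hk := by
  refine Finset.mem_union.mpr (Or.inl (Finset.mem_union.mpr (Or.inr ?_)))
  refine Finset.mem_image.mpr ⟨k - 1, Finset.mem_range.mpr (by omega), ?_⟩
  unfold f1; rw [if_neg (by omega)]

lemma mem_bigS_f2 {i : ℕ} (hi : i < k) : (pv k hk (5 * i + 4), olayer i) ∈ bigS k hk :=
  Finset.mem_union.mpr (Or.inr (Finset.mem_image.mpr ⟨i, Finset.mem_range.mpr hi, rfl⟩))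

end

lemma bigS_tds (k : ℕ) (hk2 : 2 ≤ k) :
    IsTotalDominatingSet (gkGraph k □ K2) (bigS k (by omega : 0 < k)) := by
  have hk : 0 < k := by omega
  have main : ∀ (i rr : ℕ), i < k → rr < 5 → ∀ t : Fin 2,
      ∃ u ∈ bigS k hk, (gkGraph k □ K2).Adj (pv k hk (5 * i + rr), t) u := by
    intro i rr hi hr5 t
    have ht2 : t = layer i ∨ t = olayer i := by
      rcases t with ⟨tv, htv⟩
      by_cases h : tv = i % 2
      · exact Or.inl (Fin.ext h)
      · exact Or.inr (Fin.ext (show tv = (i + 1) % 2 by omega))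
    have hlast : i < k - 1 ∨ i = k - 1 := by omega
    have hr : rr = 0 ∨ rr = 1 ∨ rr = 2 ∨ rr = 3 ∨ rr = 4 := by omega
    rcases hr with rfl | rfl | rfl | rfl | rfl <;> rcases ht2 with rfl | rfl
    · -- r = 0, t = layer i
      rcases hlast with h | h
      · exact ⟨(pv k hk (5 * i + 1), layer i), mem_bigS_f1a hk h,
          prism_adj_layer (gk_adj_nat hk (by omega) (by omega)
            (Or.inl ⟨i, hi, Or.inl ⟨by omega, rfl⟩⟩)) (layer i)⟩
      · refine ⟨(pv k hk (5 * (i - 1) + 4), olayer (i - 1)), mem_bigS_f2 hk (by omega), ?_⟩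
        have hol : olayer (i - 1) = layer i := Fin.ext (show (i - 1 + 1) % 2 = i % 2 by omega)
        rw [hol]
        exact prism_adj_layer ((gk_adj_nat hk (by omega) (by omega)
          (Or.inr ⟨i, by omega, by omega, by omega, by omega⟩)).symm) (layer i)
    · -- r = 0, t = olayer i : rung to f0
      exact ⟨(pv k hk (5 * i), layer i), mem_bigS_f0 hk hi,
        prism_adj_rung _ (Ne.symm (layer_ne_olayer i))⟩
    · -- r = 1, t = layer i : f0, pair (0,1) reversed
      exact ⟨(pv k hk (5 * i), layer i), mem_bigS_f0 hk hi,
        prism_adj_layer ((gk_adj_nat hk (by omega) (by omega)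
          (Or.inl ⟨i, hi, Or.inl ⟨rfl, rfl⟩⟩)).symm) (layer i)⟩
    · -- r = 1, t = olayer i
      rcases hlast with h | h
      · exact ⟨(pv k hk (5 * i + 1), layer i), mem_bigS_f1a hk h,
          prism_adj_rung _ (Ne.symm (layer_ne_olayer i))⟩
      · subst h
        exact ⟨(pv k hk (5 * (k - 1) + 3), olayer (k - 1)), mem_bigS_f1b hk,
          prism_adj_layer (gk_adj_nat hk (by omega) (by omega)
            (Or.inl ⟨k - 1, by omega, Or.inr (Or.inl ⟨rfl, rfl⟩)⟩)) (olayer (k - 1))⟩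
    · -- r = 2, t = layer i : f0, pair (2,0) direct
      exact ⟨(pv k hk (5 * i), layer i), mem_bigS_f0 hk hi,
        prism_adj_layer (gk_adj_nat hk (by omega) (by omega)
          (Or.inl ⟨i, hi, by tauto⟩)) (layer i)⟩
    · -- r = 2, t = olayer i : f2, pair (4,2) reversed
      exact ⟨(pv k hk (5 * i + 4), olayer i), mem_bigS_f2 hk hi,
        prism_adj_layer ((gk_adj_nat hk (by omega) (by omega)
          (Or.inl ⟨i, hi, by tauto⟩)).symm) (olayer i)⟩
    · -- r = 3, t = layer i
      rcases hlast with h | h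
      · exact ⟨(pv k hk (5 * i + 1), layer i), mem_bigS_f1a hk h,
          prism_adj_layer ((gk_adj_nat hk (by omega) (by omega)
            (Or.inl ⟨i, hi, by tauto⟩)).symm) (layer i)⟩
      · subst h
        exact ⟨(pv k hk (5 * (k - 1) + 3), olayer (k - 1)), mem_bigS_f1b hk,
          prism_adj_rung _ (layer_ne_olayer (k - 1))⟩
    · -- r = 3, t = olayer i : f2, pair (3,4) direct
      exact ⟨(pv k hk (5 * i + 4), olayer i), mem_bigS_f2 hk hi,
        prism_adj_layer (gk_adj_nat hk (by omega) (by omega)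
          (Or.inl ⟨i, hi, by tauto⟩)) (olayer i)⟩
    · -- r = 4, t = layer i : rung to f2
      exact ⟨(pv k hk (5 * i + 4), olayer i), mem_bigS_f2 hk hi,
        prism_adj_rung _ (layer_ne_olayer i)⟩
    · -- r = 4, t = olayer i
      rcases hlast with h | h
      · refine ⟨(pv k hk (5 * (i + 1)), layer (i + 1)), mem_bigS_f0 hk (by omega), ?_⟩
        have hol : layer (i + 1) = olayer i := rfl
        rw [hol]
        exact prism_adj_layer (gk_adj_nat hk (by omega) (by omega)
          (Or.inr ⟨i + 1, by omega, by omega, by omega, by omega⟩)) (olayer i)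
      · subst h
        exact ⟨(pv k hk (5 * (k - 1) + 3), olayer (k - 1)), mem_bigS_f1b hk,
          prism_adj_layer ((gk_adj_nat hk (by omega) (by omega)
            (Or.inl ⟨k - 1, by omega, by tauto⟩)).symm) (olayer (k - 1))⟩
  intro v
  obtain ⟨a, t⟩ := v
  have hae : pv k hk (5 * (a.val / 5) + a.val % 5) = a :=
    Fin.ext (by rw [pv_val hk (by omega)]; omega)
  obtain ⟨u, hu1, hu2⟩ := main (a.val / 5) (a.val % 5) (by omega) (by omega) t
  rw [hae] at hu2
  exact ⟨u, hu1, hu2⟩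

/-! ### Lower bound -/

abbrev locAdjN (r : ℕ) (t : Fin 2) (c : ℕ) (t' : Fin 2) : Prop :=
  (c = r ∧ t' ≠ t) ∨ (t' = t ∧
    ((r = 0 ∧ c = 1) ∨ (r = 1 ∧ c = 0) ∨ (r = 1 ∧ c = 3) ∨ (r = 3 ∧ c = 1) ∨
     (r = 3 ∧ c = 4) ∨ (r = 4 ∧ c = 3) ∨ (r = 4 ∧ c = 2) ∨ (r = 2 ∧ c = 4) ∨
     (r = 2 ∧ c = 0) ∨ (r = 0 ∧ c = 2)))

instance locAdjN.dec (r : ℕ) (t : Fin 2) (c : ℕ) (t' : Fin 2) : Decidable (locAdjN r t c t') := by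
  unfold locAdjN; infer_instance

lemma local6 (cx cy : Fin 5) (tx ty : Fin 2) :
    ¬ ((locAdjN 1 0 cx.val tx ∨ locAdjN 1 0 cy.val ty) ∧
       (locAdjN 1 1 cx.val tx ∨ locAdjN 1 1 cy.val ty) ∧
       (locAdjN 2 0 cx.val tx ∨ locAdjN 2 0 cy.val ty) ∧
       (locAdjN 2 1 cx.val tx ∨ locAdjN 2 1 cy.val ty) ∧
       (locAdjN 3 0 cx.val tx ∨ locAdjN 3 0 cy.val ty) ∧
       (locAdjN 3 1 cx.val tx ∨ locAdjN 3 1 cy.val ty)) := by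
  revert cx cy tx ty; decide

/-- Any prism-neighbor of a "middle" vertex of block `i` lies in block `i`,
with explicitly constrained residue/layer. -/
lemma middle_adj {k : ℕ} (hk : 0 < k) {i r : ℕ} (hi : i < k) (hr : r = 1 ∨ r = 2 ∨ r = 3)
    (t : Fin 2) (u : Fin (5 * k) × Fin 2)
    (h : (gkGraph k □ K2).Adj (pv k hk (5 * i + r), t) u) :
    u.1.val / 5 = i ∧ locAdjN r t (u.1.val % 5) u.2 := by
  have hval : (pv k hk (5 * i + r)).val = 5 * i + r := pv_val hk (by omega)
  have hu : u.1.val < 5 * k := u.1.isLt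
  rw [SimpleGraph.boxProd_adj] at h
  rcases h with ⟨hadj, ht⟩ | ⟨hadj, ha⟩
  · -- same layer, gkGraph edge
    have hadj' : (gkGraph k).Adj (pv k hk (5 * i + r)) u.1 := hadj
    rw [gkGraph, SimpleGraph.fromRel_adj] at hadj'
    obtain ⟨-, hrel⟩ := hadj'
    have ht' : u.2 = t := ht.symm
    rcases hr with rfl | rfl | rfl <;>
        rcases hrel with hrel | hrel <;> unfold gkRel at hrel <;>
        rcases hrel with ⟨i', hi', hc | hc | hc | hc | hc⟩ | ⟨j, hj1, hj2, h1, h2⟩ <;>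
        refine ⟨by omega, Or.inr ⟨ht', ?_⟩⟩ <;> norm_num <;> omega
  · -- rung
    have h2 : u.2 ≠ t := fun he => ((SimpleGraph.top_adj t u.2).mp hadj) he.symm
    have h1 : u.1.val = 5 * i + r := by rw [← ha]; exact hval
    exact ⟨by omega, Or.inl ⟨by omega, h2⟩⟩


lemma two_elem {α : Type*} [DecidableEq α] {T : Finset α} (h : T.card ≤ 2) (hne : T.Nonempty) :
    ∃ x y, ∀ a ∈ T, a = x ∨ a = y := by
  rcases Nat.lt_or_ge T.card 2 with h2 | h2
  · obtain ⟨x, hx⟩ := hne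
    refine ⟨x, x, fun a ha => Or.inl ?_⟩
    exact Finset.card_le_one.mp (by omega) a ha x hx
  · obtain ⟨x, y, hxy, rfl⟩ := Finset.card_eq_two.mp (le_antisymm h h2)
    exact ⟨x, y, fun a ha => by simpa using ha⟩

lemma block_lower {k : ℕ} (hk : 0 < k) {S : Finset (Fin (5 * k) × Fin 2)}
    (hS : IsTotalDominatingSet (gkGraph k □ K2) S) {i : ℕ} (hi : i < k) :
    3 ≤ (S.filter (fun v => v.1.val / 5 = i)).card := by
  classical
  by_contra hcon
  push_neg at hcon
  have wit : ∀ (r : ℕ), r = 1 ∨ r = 2 ∨ r = 3 → ∀ t : Fin 2,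
      ∃ u ∈ S.filter (fun v => v.1.val / 5 = i), locAdjN r t (u.1.val % 5) u.2 := by
    intro r hr t
    obtain ⟨u, huS, hadj⟩ := hS (pv k hk (5 * i + r), t)
    have hm := middle_adj hk hi hr t u hadj
    exact ⟨u, Finset.mem_filter.mpr ⟨huS, hm.1⟩, hm.2⟩
  obtain ⟨u0, hu0, hl0⟩ := wit 1 (by tauto) 0
  obtain ⟨x, y, hxy⟩ := two_elem (by omega) ⟨u0, hu0⟩
  have key : ∀ (r : ℕ), r = 1 ∨ r = 2 ∨ r = 3 → ∀ t : Fin 2,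
      locAdjN r t (x.1.val % 5) x.2 ∨ locAdjN r t (y.1.val % 5) y.2 := by
    intro r hr t
    obtain ⟨u, hu, hl⟩ := wit r hr t
    rcases hxy u hu with rfl | rfl
    · exact Or.inl hl
    · exact Or.inr hl
  exact local6 ⟨x.1.val % 5, by omega⟩ ⟨y.1.val % 5, by omega⟩ x.2 y.2
    ⟨key 1 (by tauto) 0, key 1 (by tauto) 1, key 2 (by tauto) 0,
     key 2 (by tauto) 1, key 3 (by tauto) 0, key 3 (by tauto) 1⟩

lemma tds_lower {k : ℕ} (hk : 0 < k) (S : Finset (Fin (5 * k) × Fin 2))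
    (hS : IsTotalDominatingSet (gkGraph k □ K2) S) : 3 * k ≤ S.card := by
  classical
  have hcard : S.card = ∑ i ∈ Finset.range k, (S.filter (fun v => v.1.val / 5 = i)).card :=
    Finset.card_eq_sum_card_fiberwise
      (fun v _ => Finset.mem_range.mpr (by have := v.1.isLt; omega))
  rw [hcard]
  calc 3 * k = ∑ _i ∈ Finset.range k, 3 := by
        rw [Finset.sum_const, Finset.card_range, smul_eq_mul, mul_comm]
    _ ≤ _ := Finset.sum_le_sum (fun i hi => block_lower hk hS (Finset.mem_range.mp hi))

/-- For `k ≥ 2`, the total domination number of the prism of `G_k` is `3k`. -/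
theorem totalDomination_prism_gkGraph (k : ℕ) (hk : 2 ≤ k) :
    totalDominationNumber (gkGraph k □ K2) = 3 * k := by
  have hk0 : 0 < k := by omega
  have hmem : 3 * k ∈ {n : ℕ | ∃ S : Finset (Fin (5 * k) × Fin 2),
      IsTotalDominatingSet (gkGraph k □ K2) S ∧ S.card = n} :=
    ⟨bigS k hk0, bigS_tds k hk, bigS_card k hk0⟩
  refine le_antisymm (Nat.sInf_le hmem) (le_csInf ⟨_, hmem⟩ ?_)
  rintro n ⟨S, hS, rfl⟩
  exact tds_lower hk0 S hS
end

section
/- For every finite graph G with at least one vertex, the total restrained domination number of the prism of G is at most twice the domination number of G: γ_tr(G □ K₂) ≤ 2·γ(G). -/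
open SimpleGraph

/-- For every finite graph `G` with at least one vertex, `γ_tr(G □ K₂) ≤ 2 γ(G)`. -/
theorem totalRestrainedDomination_prism_le (V : Type*) [Fintype V] [Nonempty V]
    (G : SimpleGraph V) :
    totalRestrainedDominationNumber (G □ K2) ≤ 2 * dominationNumber G := by
  classical
  -- the set of achievable dominating-set cardinalities is nonempty
  have hne : {n : ℕ | ∃ S : Finset V, IsDominatingSet G S ∧ S.card = n}.Nonempty :=
    ⟨(Finset.univ : Finset V).card, Finset.univ, fun v hv => absurd (Finset.mem_univ v) hv,
      rfl⟩
  obtain ⟨D, hD, hcard⟩ := Nat.sInf_mem hne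
  -- D is nonempty since V is nonempty and D dominates
  have hDne : D.Nonempty := by
    by_contra h
    obtain ⟨v⟩ := ‹Nonempty V›
    have hv : v ∉ D := fun hv => h ⟨v, hv⟩
    obtain ⟨u, hu, _⟩ := hD v hv
    exact h ⟨u, hu⟩
  set S : Finset (V × Fin 2) := D ×ˢ Finset.univ with hS
  have hmem : ∀ p : V × Fin 2, p ∈ S ↔ p.1 ∈ D := by
    intro p
    simp [hS, Finset.mem_product]
  have htrd : IsTotalRestrainedDominatingSet (G □ K2) S := by
    constructor
    · rintro ⟨v, i⟩
      by_cases hv : v ∈ D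
      · refine ⟨(v, i + 1), (hmem _).2 hv, ?_⟩
        exact Or.inr ⟨by simp [K2], rfl⟩
      · obtain ⟨u, hu, hadj⟩ := hD v hv
        exact ⟨(u, i), (hmem _).2 hu, Or.inl ⟨hadj, rfl⟩⟩
    · rintro ⟨v, i⟩ hvi
      have hv : v ∉ D := fun h => hvi ((hmem _).2 h)
      refine ⟨(v, i + 1), fun h => hv ((hmem _).1 h), ?_⟩
      exact Or.inr ⟨by simp [K2], rfl⟩
  have hScard : S.card = 2 * dominationNumber G := by
    rw [hS, Finset.card_product, hcard]
    simp [dominationNumber, mul_comm]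
  exact Nat.sInf_le ⟨S, htrd, hScard⟩
end

section
/- Let G be a finite connected bipartite graph of order at least 2, and let X, Y be the two partite sets of the bipartite graph G □ K₂. If T ⊆ X is a set of vertices such that T intersects the open neighborhood N_{G □ K₂}(w) of every vertex w ∈ Y, then γ(G) ≤ |T|. -/
open SimpleGraph

/-- Let `G` be a finite connected bipartite graph of order at least 2, and let `X`, `Y`
be the two partite sets of `G □ K₂`. If `T ⊆ X` meets the open neighborhood of every
vertex of `Y`, then `γ(G) ≤ |T|`. -/
theorem domination_le_transversal {V : Type*} [Fintype V] [DecidableEq V] (G : SimpleGraph V)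
    (hconn : G.Connected) (hbip : G.Colorable 2) (hcard : 2 ≤ Fintype.card V)
    (X Y : Finset (V × Fin 2))
    (hunion : X ∪ Y = Finset.univ) (hdisj : Disjoint X Y)
    (hpart : ∀ u v : V × Fin 2, (G □ K2).Adj u v →
      (u ∈ X ∧ v ∈ Y) ∨ (u ∈ Y ∧ v ∈ X))
    (T : Finset (V × Fin 2)) (hTX : T ⊆ X)
    (hT : ∀ w ∈ Y, ∃ u ∈ T, (G □ K2).Adj w u) :
    dominationNumber G ≤ T.card := by
  set S : Finset V := T.image Prod.fst with hS
  have hdom : IsDominatingSet G S := by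
    intro v hv
    -- (v,0) and (v,1) are adjacent in G □ K2
    have hadj : (G □ K2).Adj (v, 0) (v, 1) := by
      exact SimpleGraph.boxProd_adj.2 (Or.inr ⟨(by decide : (0:Fin 2) ≠ 1), rfl⟩)
    have hY : (v, (0 : Fin 2)) ∈ Y ∨ (v, (1 : Fin 2)) ∈ Y := by
      rcases hpart _ _ hadj with ⟨_, h⟩ | ⟨h, _⟩
      · exact Or.inr h
      · exact Or.inl h
    obtain ⟨i, hi⟩ : ∃ i : Fin 2, (v, i) ∈ Y := by
      rcases hY with h | h
      · exact ⟨0, h⟩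
      · exact ⟨1, h⟩
    obtain ⟨u, huT, hadj'⟩ := hT _ hi
    rcases hadj' with ⟨hG, h2⟩ | ⟨hK, h1⟩
    · refine ⟨u.1, Finset.mem_image_of_mem _ huT, hG⟩
    · exfalso
      apply hv
      have : u.1 = v := h1.symm
      rw [← this]
      exact Finset.mem_image_of_mem _ huT
  have hle : dominationNumber G ≤ S.card :=
    Nat.sInf_le ⟨S, hdom, rfl⟩
  exact hle.trans (Finset.card_image_le)
end

section
/- Let G be a finite connected bipartite graph of order at least 2, and let X, Y be the two partite sets of the bipartite graph G □ K₂. Then γ_t(G □ K₂) = 2·τ, where τ is the minimum cardinality of a set T ⊆ X that intersects the open neighborhood N_{G □ K₂}(w) of every vertex w ∈ Y. -/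
open SimpleGraph

/-- Let `G` be a finite connected bipartite graph of order at least 2, and let `X`, `Y`
be the two partite sets of `G □ K₂`. Then `γ_t(G □ K₂) = 2τ`, where `τ` is the minimum
size of a set `T ⊆ X` meeting the open neighborhood of every vertex of `Y`. -/
theorem totalDomination_prism_eq_two_mul_transversal {V : Type*} [Fintype V] [DecidableEq V]
    (G : SimpleGraph V)
    (hconn : G.Connected) (hbip : G.Colorable 2) (hcard : 2 ≤ Fintype.card V)
    (X Y : Finset (V × Fin 2))
    (hunion : X ∪ Y = Finset.univ) (hdisj : Disjoint X Y)
    (hpart : ∀ u v : V × Fin 2, (G □ K2).Adj u v →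
      (u ∈ X ∧ v ∈ Y) ∨ (u ∈ Y ∧ v ∈ X)) :
    totalDominationNumber (G □ K2) =
      2 * sInf {n : ℕ | ∃ T : Finset (V × Fin 2), T ⊆ X ∧
        (∀ w ∈ Y, ∃ u ∈ T, (G □ K2).Adj w u) ∧ T.card = n} := by
  classical
  set σ : V × Fin 2 → V × Fin 2 := fun p => (p.1, p.2 + 1) with hσ
  have hinv : Function.Involutive σ := by
    intro p
    have h : ∀ x : Fin 2, x + 1 + 1 = x := by decide
    simp [hσ, h]
  have hinj : Function.Injective σ := hinv.injective
  have hadjself : ∀ p : V × Fin 2, (G □ K2).Adj p (σ p) := by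
    intro p
    rw [SimpleGraph.boxProd_adj]
    right
    refine ⟨?_, rfl⟩
    have h : ∀ x : Fin 2, (⊤ : SimpleGraph (Fin 2)).Adj x (x + 1) := by
      intro x; rw [top_adj]; revert x; decide
    exact h p.2
  have hadjiff : ∀ p q : V × Fin 2, (G □ K2).Adj (σ p) (σ q) ↔ (G □ K2).Adj p q := by
    intro p q
    have h1 : ∀ x y : Fin 2, (x + 1 = y + 1) ↔ x = y := by decide
    have h2 : ∀ x y : Fin 2, (x + 1 ≠ y + 1) ↔ x ≠ y := by decide
    simp only [SimpleGraph.boxProd_adj, hσ, top_adj, h1, h2]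
  have hmem : ∀ p : V × Fin 2, p ∈ X ∨ p ∈ Y := by
    intro p
    have h := Finset.mem_univ p
    rw [← hunion, Finset.mem_union] at h
    exact h
  have hXnY : ∀ p ∈ X, p ∉ Y := fun p hp => Finset.disjoint_left.mp hdisj hp
  have hYnX : ∀ p ∈ Y, p ∉ X := fun p hp => Finset.disjoint_right.mp hdisj hp
  have hXY : ∀ p ∈ X, σ p ∈ Y := by
    intro p hp
    rcases hpart p (σ p) (hadjself p) with ⟨_, h⟩ | ⟨h, _⟩
    · exact h
    · exact absurd h (hXnY p hp)
  have hYX : ∀ p ∈ Y, σ p ∈ X := by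
    intro p hp
    rcases hpart p (σ p) (hadjself p) with ⟨h, _⟩ | ⟨_, h⟩
    · exact absurd h (hYnX p hp)
    · exact h
  set τset : Set ℕ := {n : ℕ | ∃ T : Finset (V × Fin 2), T ⊆ X ∧
        (∀ w ∈ Y, ∃ u ∈ T, (G □ K2).Adj w u) ∧ T.card = n} with hτset
  have hτne : τset.Nonempty :=
    ⟨X.card, X, subset_rfl, fun w hw => ⟨σ w, hYX w hw, hadjself w⟩, rfl⟩
  obtain ⟨T, hTX, hTdom, hTcard⟩ := Nat.sInf_mem hτne
  -- upper bound
  have hub : totalDominationNumber (G □ K2) ≤ 2 * sInf τset := by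
    apply Nat.sInf_le
    refine ⟨T ∪ T.image σ, ?_, ?_⟩
    · intro v
      rcases hmem v with hv | hv
      · obtain ⟨u, hu, hadj⟩ := hTdom (σ v) (hXY v hv)
        refine ⟨σ u, Finset.mem_union_right _ (Finset.mem_image_of_mem σ hu), ?_⟩
        have h := (hadjiff (σ v) u).mpr hadj
        rwa [hinv v] at h
      · obtain ⟨u, hu, hadj⟩ := hTdom v hv
        exact ⟨u, Finset.mem_union_left _ hu, hadj⟩
    · have hd : Disjoint T (T.image σ) := by
        rw [Finset.disjoint_left]
        intro a ha hai
        obtain ⟨b, hb, rfl⟩ := Finset.mem_image.mp hai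
        exact hXnY _ (hTX ha) (hXY b (hTX hb))
      rw [Finset.card_union_of_disjoint hd, Finset.card_image_of_injective _ hinj,
        hTcard, two_mul]
  -- lower bound
  have hγne : {n : ℕ | ∃ S : Finset (V × Fin 2),
      IsTotalDominatingSet (G □ K2) S ∧ S.card = n}.Nonempty :=
    ⟨_, Finset.univ, fun v => ⟨σ v, Finset.mem_univ _, hadjself v⟩, rfl⟩
  obtain ⟨S, hS, hScard⟩ := Nat.sInf_mem hγne
  have h1 : sInf τset ≤ (S ∩ X).card := by
    apply Nat.sInf_le
    refine ⟨S ∩ X, Finset.inter_subset_right, ?_, rfl⟩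
    intro w hw
    obtain ⟨u, hu, hadj⟩ := hS w
    have huX : u ∈ X := by
      rcases hpart w u hadj with ⟨h, _⟩ | ⟨_, h⟩
      · exact absurd h (hYnX w hw)
      · exact h
    exact ⟨u, Finset.mem_inter.mpr ⟨hu, huX⟩, hadj⟩
  have h2 : sInf τset ≤ (S ∩ Y).card := by
    apply Nat.sInf_le
    refine ⟨(S ∩ Y).image σ, ?_, ?_, Finset.card_image_of_injective _ hinj⟩
    · intro a ha
      obtain ⟨b, hb, rfl⟩ := Finset.mem_image.mp ha
      exact hYX b (Finset.mem_inter.mp hb).2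
    · intro w hw
      obtain ⟨u, hu, hadj⟩ := hS (σ w)
      have huY : u ∈ Y := by
        rcases hpart (σ w) u hadj with ⟨_, h⟩ | ⟨h, _⟩
        · exact h
        · exact absurd h (hXnY _ (hYX w hw))
      refine ⟨σ u, Finset.mem_image_of_mem σ (Finset.mem_inter.mpr ⟨hu, huY⟩), ?_⟩
      have h := (hadjiff (σ w) u).mpr hadj
      rwa [hinv w] at h
  have hsplit : (S ∩ X).card + (S ∩ Y).card = S.card := by
    have hd : Disjoint (S ∩ X) (S ∩ Y) :=
      hdisj.mono Finset.inter_subset_right Finset.inter_subset_right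
    rw [← Finset.card_union_of_disjoint hd, ← Finset.inter_union_distrib_left, hunion,
      Finset.inter_univ]
  have hlb : 2 * sInf τset ≤ totalDominationNumber (G □ K2) := by
    rw [totalDominationNumber, ← hScard, ← hsplit]
    omega
  exact le_antisymm hub hlb
end
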